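/- arXiv:1701.03944 — 4 statements merged into one kernel-verified Lean document; each statement's English description precedes it below -/
import Mathlib

section
/- Let n ≥ 2 and let L be a non-returning regular language of state complexity n over a two-letter alphabet. Then the number of atoms of L is strictly less than 2^n; that is, at least one atomic intersection A_S, S ⊆ Q_n, is empty. -/
/-- Left quotient of a language by a word. -/
def leftQuot {α : Type} (L : Set (List α)) (w : List α) : Set (List α) := {x | w ++ x ∈ L}

/-- The set of left quotients of `L`. -/
def quotients {α : Type} (L : Set (List α)) : Set (Set (List α)) :=
  Set.range (leftQuot L)

/-- `L` is non-returning: no quotient by a nonempty word equals `L`. -/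
def NonReturning {α : Type} (L : Set (List α)) : Prop :=
  ∀ w : List α, w ≠ [] → leftQuot L w ≠ L

/-- The atomic intersection `A_S = ⋂_{i∈S} K_i ∩ ⋂_{i∉S} K_iᶜ` of a language whose
distinct left quotients are `K_0, …, K_{n-1}`. -/
def atomInt {α : Type} {n : ℕ} (K : Fin n → Set (List α)) (S : Set (Fin n)) :
    Set (List α) :=
  {w | ∀ i : Fin n, (i ∈ S → w ∈ K i) ∧ (i ∉ S → w ∉ K i)}

/-!
Since `L` is non-returning, the transition by a letter `c` maps the `n` states into the
`n - 1` non-initial ones, so it merges two distinct states `i ≠ j`; then `cy ∈ K i ↔ cy ∈ K j`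
for every word `y`. With two letters there is a set `S` of states separating both merged pairs,
and so does `Sᶜ`. A word of `A_S` (or `A_{Sᶜ}`) cannot start with a letter, so it must be the
empty word, which lies in exactly one atom; hence one of `A_S`, `A_{Sᶜ}` is empty.
-/

variable {α : Type}

lemma leftQuot_append (L : Set (List α)) (w v : List α) :
    leftQuot (leftQuot L w) v = leftQuot L (w ++ v) := by
  ext x
  simp [leftQuot, List.append_assoc]

lemma mem_atomInt_iff {n : ℕ} {K : Fin n → Set (List α)} {S : Set (Fin n)} {w : List α} :
    w ∈ atomInt K S ↔ ∀ i, w ∈ K i ↔ i ∈ S := by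
  refine forall_congr' fun i => ?_
  by_cases hi : i ∈ S <;> simp [hi]

lemma NonReturning.exists_index_ne_eq_leftQuot {L : Set (List α)} (hNR : NonReturning L)
    {ι : Type*} {K : ι → Set (List α)} (hKrange : Set.range K = quotients L) {i₀ : ι}
    (hK₀ : K i₀ = L) (i : ι) (c : α) : ∃ j, j ≠ i₀ ∧ K j = leftQuot (K i) [c] := by
  obtain ⟨w, hw⟩ : K i ∈ quotients L := hKrange ▸ Set.mem_range_self i
  obtain ⟨j, hj⟩ : leftQuot L (w ++ [c]) ∈ Set.range K := hKrange ▸ ⟨w ++ [c], rfl⟩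
  refine ⟨j, ?_, by rw [hj, ← hw, leftQuot_append]⟩
  rintro rfl
  exact hNR (w ++ [c]) (by simp) (hj ▸ hK₀)

lemma exists_ne_leftQuot_eq_of_forall_ne {ι : Type*} [Finite ι] (K : ι → Set (List α)) (i₀ : ι)
    (c : α) (hstep : ∀ i, ∃ j, j ≠ i₀ ∧ K j = leftQuot (K i) [c]) :
    ∃ i j, i ≠ j ∧ leftQuot (K i) [c] = leftQuot (K j) [c] := by
  choose f hf₀ hf using hstep
  have hf_not_surj : ¬ Function.Surjective f := fun h => (h i₀).elim fun i hi => hf₀ i hi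
  obtain ⟨i, j, hij, hne⟩ :=
    Function.not_injective_iff.mp (mt Finite.injective_iff_surjective.mp hf_not_surj)
  exact ⟨i, j, hne, by rw [← hf, ← hf, hij]⟩

lemma exists_set_separating_two_pairs {β : Type*} {i₁ j₁ i₂ j₂ : β} (h₁ : i₁ ≠ j₁)
    (h₂ : i₂ ≠ j₂) : ∃ S : Set β, ¬(i₁ ∈ S ↔ j₁ ∈ S) ∧ ¬(i₂ ∈ S ↔ j₂ ∈ S) := by
  by_cases h : i₁ = i₂ ∨ i₁ = j₂
  · exact ⟨{i₁}, by grind⟩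
  by_cases h' : j₁ = i₂
  · exact ⟨{i₁, j₂}, by grind⟩
  · exact ⟨{i₁, i₂}, by grind⟩

def SplitsMergedPairs {n : ℕ} (K : Fin n → Set (List α)) (S : Set (Fin n)) : Prop :=
  ∀ c : α, ∃ i j, leftQuot (K i) [c] = leftQuot (K j) [c] ∧ ¬(i ∈ S ↔ j ∈ S)

lemma SplitsMergedPairs.compl {n : ℕ} {K : Fin n → Set (List α)} {S : Set (Fin n)}
    (hS : SplitsMergedPairs K S) : SplitsMergedPairs K Sᶜ := by
  intro c
  obtain ⟨i, j, hij, hsplit⟩ := hS c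
  exact ⟨i, j, hij, by rwa [Set.mem_compl_iff, Set.mem_compl_iff, not_iff_not]⟩

lemma SplitsMergedPairs.atomInt_eq_empty {n : ℕ} {K : Fin n → Set (List α)} {S : Set (Fin n)}
    (hS : SplitsMergedPairs K S) (hε : S ≠ {i | [] ∈ K i}) : atomInt K S = ∅ := by
  refine Set.eq_empty_of_forall_notMem fun w hw => ?_
  rw [mem_atomInt_iff] at hw
  cases w with
  | nil => exact hε (Set.ext fun i => (hw i).symm)
  | cons c y =>
    obtain ⟨i, j, hij, hsplit⟩ := hS c
    have hi : c :: y ∈ K i ↔ y ∈ leftQuot (K i) [c] := Iff.rfl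
    have hj : c :: y ∈ K j ↔ y ∈ leftQuot (K j) [c] := Iff.rfl
    exact hsplit (by rw [← hw, ← hw, hi, hj, hij])

lemma SplitsMergedPairs.exists_atomInt_eq_empty [Nonempty α] {n : ℕ}
    {K : Fin n → Set (List α)} {S : Set (Fin n)} (hS : SplitsMergedPairs K S) :
    ∃ S' : Set (Fin n), atomInt K S' = ∅ := by
  have : Nonempty (Fin n) := ⟨(hS (Classical.arbitrary α)).choose⟩
  by_cases hε : S = {i | [] ∈ K i}
  · exact ⟨Sᶜ, hS.compl.atomInt_eq_empty (hε ▸ compl_ne_self)⟩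
  · exact ⟨S, hS.atomInt_eq_empty hε⟩

lemma card_atoms_lt_of_atomInt_eq_empty {n : ℕ} (K : Fin n → Set (List α)) {S : Set (Fin n)}
    (hS : atomInt K S = ∅) :
    Nat.card {A : Set (List α) | ∃ S : Set (Fin n), A = atomInt K S ∧ A.Nonempty} < 2 ^ n := by
  have himage : {A : Set (List α) | ∃ S : Set (Fin n), A = atomInt K S ∧ A.Nonempty}
      = atomInt K '' {S | (atomInt K S).Nonempty} := by
    ext A
    constructor
    · rintro ⟨S, rfl, hne⟩
      exact ⟨S, hne, rfl⟩
    · rintro ⟨S, hne, rfl⟩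
      exact ⟨S, rfl, hne⟩
  have hproper : {S | (atomInt K S).Nonempty} ⊂ Set.univ :=
    Set.ssubset_univ_iff.mpr fun h =>
      (show S ∈ {S | (atomInt K S).Nonempty} from h ▸ Set.mem_univ S).ne_empty hS
  rw [Nat.card_coe_set_eq, himage]
  calc (atomInt K '' {S | (atomInt K S).Nonempty}).ncard
      ≤ {S | (atomInt K S).Nonempty}.ncard := Set.ncard_image_le (Set.toFinite _)
    _ < (Set.univ : Set (Set (Fin n))).ncard := Set.ncard_lt_ncard hproper
    _ = 2 ^ n := by
      rw [Set.ncard_univ, Nat.card_eq_fintype_card, Fintype.card_set, Fintype.card_fin]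

/-- A non-returning regular language of state complexity `n` over a two-letter alphabet
has fewer than `2^n` atoms: some atomic intersection is empty. Here `K` enumerates the
`n` distinct left quotients of `L`, with `K 0 = L` the quotient of the initial state. -/
theorem stmt7 {α : Type} (hα : Nat.card α = 2) (n : ℕ) (hn : 2 ≤ n)
    (L : Set (List α)) (hNR : NonReturning L)
    (K : Fin n → Set (List α))
    (hKrange : Set.range K = quotients L) (hK0 : K ⟨0, by omega⟩ = L) :
    Nat.card {A : Set (List α) | ∃ S : Set (Fin n), A = atomInt K S ∧ A.Nonempty} < 2 ^ n
    ∧ ∃ S : Set (Fin n), atomInt K S = ∅ := by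
  obtain ⟨a, b, -, hab⟩ := Nat.card_eq_two_iff.mp hα
  have hmerge (c : α) : ∃ i j, i ≠ j ∧ leftQuot (K i) [c] = leftQuot (K j) [c] :=
    exists_ne_leftQuot_eq_of_forall_ne K _ c fun i =>
      hNR.exists_index_ne_eq_leftQuot hKrange hK0 i c
  obtain ⟨i₁, j₁, hne₁, heq₁⟩ := hmerge a
  obtain ⟨i₂, j₂, hne₂, heq₂⟩ := hmerge b
  obtain ⟨S, hsep₁, hsep₂⟩ := exists_set_separating_two_pairs hne₁ hne₂
  have hS : SplitsMergedPairs K S := by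
    intro c
    have hc : c ∈ ({a, b} : Set α) := hab ▸ Set.mem_univ c
    rcases hc with rfl | rfl
    · exact ⟨i₁, j₁, heq₁, hsep₁⟩
    · exact ⟨i₂, j₂, heq₂, hsep₂⟩
  have : Nonempty α := ⟨a⟩
  obtain ⟨S₀, hS₀⟩ := hS.exists_atomInt_eq_empty
  exact ⟨card_atoms_lt_of_atomInt_eq_empty K hS₀, S₀, hS₀⟩
end

section
/- Let n ≥ 4. For every S ⊆ Q_n, the atomic intersection A_S of L_n(Σ_n) is an atom, and its state complexity meets the following bounds with equality: κ(A_S) = 2^{n-1} if S = ∅ or S = Q_n, and κ(A_S) = 2 + Σ_{x=1}^{|S|} Σ_{y=1}^{n-|S|} C(n-1,x)·C(n-1-x,y) if ∅ ⊊ S ⊊ Q_n (where C(·,·) denotes binomial coefficients). -/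
/-- The state complexity of `L`: the number of distinct left quotients of `L`. -/
noncomputable def stateComplexity {α : Type} (L : Set (List α)) : ℕ :=
  Nat.card (quotients L)

/-- The rank of a transformation of `Fin n`: the cardinality of its image. -/
def rank {n : ℕ} (t : Fin n → Fin n) : ℕ := (Finset.univ.image t).card

/-! On the nonzero states the letter `a` is a full cycle and `b` an adjacent transposition, so
words realize every permutation of `Q_n ∖ {0}`; a letter of type `{i,j}` followed by such a
permutation realizes every map with kernel `{i,j}` and image `Q_n ∖ {0}`. Factoring a map through
a letter of that type and sending `0` to a fresh value enlarges its image, so by induction words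
realize every map `Q_n → Q_n ∖ {0}`, and nonempty words realize nothing else.

The quotient of `A_S` by `w` consists of the words accepted from every state of `w(S)` and
rejected from every state of `w(Sᶜ)`. Every acceptance pattern occurs, so such a language is empty
exactly when the two sets meet, otherwise determines the pair, and never equals `A_S`, which also
constrains state `0`. The reachable disjoint pairs `(X, Y)` are those of subsets of `Q_n ∖ {0}`
with `|X| ≤ |S|`, `|Y| ≤ |Sᶜ|`, each nonempty when the corresponding set is; counting them gives
the formulas. -/

open Finset Function

namespace Finset

variable {α β : Type*}

lemma exists_image_eq [DecidableEq β] [Nonempty β] {s : Finset α} {t : Finset β}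
    (hcard : #t ≤ #s) (hne : s.Nonempty → t.Nonempty) : ∃ f : α → β, s.image f = t := by
  classical
  rcases s.eq_empty_or_nonempty with rfl | hs
  · rw [card_empty, Nat.le_zero, card_eq_zero] at hcard
    exact ⟨fun _ => Classical.arbitrary β, by simp [hcard]⟩
  obtain ⟨e⟩ := Function.Embedding.nonempty_of_card_le (α := t) (β := s) (by simpa using hcard)
  have : Nonempty t := (hne hs).to_subtype
  let r : s → t := Function.invFun e
  refine ⟨fun a => if h : a ∈ s then (r ⟨a, h⟩ : β) else Classical.arbitrary β, ?_⟩
  ext y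
  simp only [mem_image]
  constructor
  · rintro ⟨a, ha, rfl⟩
    simp [ha]
  · intro hy
    refine ⟨e ⟨y, hy⟩, (e ⟨y, hy⟩).2, ?_⟩
    simp [r, Function.leftInverse_invFun e.injective ⟨y, hy⟩]

lemma sum_powerset_filter_card_mem (D : Finset α) (I : Finset ℕ) (g : ℕ → ℕ) :
    ∑ X ∈ D.powerset with #X ∈ I, g #X = ∑ x ∈ I, (#D).choose x * g x := by
  rw [← sum_fiberwise_of_maps_to (g := card) (t := I) fun X hX => (mem_filter.1 hX).2]
  refine sum_congr rfl fun x hx => ?_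
  rw [filter_filter, sum_congr rfl fun X hX => by rw [(mem_filter.1 hX).2.2], sum_const,
    smul_eq_mul, ← card_powersetCard, powersetCard_eq_filter]
  congr 2
  ext X
  simp only [mem_filter, and_congr_right_iff, and_iff_right_iff_imp]
  rintro - rfl
  exact hx

lemma card_disjoint_pairs [DecidableEq α] (C : Finset α) (I J : Finset ℕ) :
    #{p ∈ C.powerset ×ˢ C.powerset | Disjoint p.1 p.2 ∧ #p.1 ∈ I ∧ #p.2 ∈ J} =
      ∑ x ∈ I, ∑ y ∈ J, (#C).choose x * (#C - x).choose y := by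
  have hfiber : ∀ X ∈ C.powerset, #{Y ∈ C.powerset | Disjoint X Y ∧ #Y ∈ J} =
      ∑ y ∈ J, (#C - #X).choose y := fun X hX => by
    have : {Y ∈ C.powerset | Disjoint X Y ∧ #Y ∈ J} = {Y ∈ (C \ X).powerset | #Y ∈ J} := by
      ext Y
      simp only [mem_filter, mem_powerset, subset_sdiff, disjoint_comm (a := X), and_assoc]
    rw [this, card_eq_sum_ones, ← card_sdiff_of_subset (mem_powerset.1 hX)]
    simpa using sum_powerset_filter_card_mem (C \ X) J fun _ => 1
  calc _ = ∑ X ∈ C.powerset with #X ∈ I, #{Y ∈ C.powerset | Disjoint X Y ∧ #Y ∈ J} := by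
        rw [card_filter, sum_product, sum_filter]
        refine sum_congr rfl fun X _ => ?_
        split_ifs with hX
        · rw [card_filter]
          simp only [hX, true_and]
        · simp [hX]
    _ = ∑ X ∈ C.powerset with #X ∈ I, ∑ y ∈ J, (#C - #X).choose y :=
        sum_congr rfl fun X hX => hfiber X (mem_filter.1 hX).1
    _ = _ := by
        rw [sum_powerset_filter_card_mem C I fun x => ∑ y ∈ J, (#C - x).choose y]
        simp_rw [mul_sum]

end Finset

lemma Nat.sum_Icc_one_choose (m : ℕ) : ∑ y ∈ Icc 1 (m + 1), m.choose y = 2 ^ m - 1 := by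
  have hIcc : Icc 1 (m + 1) = (range (m + 2)).erase 0 := by
    ext y
    simp only [mem_Icc, mem_erase, mem_range]
    omega
  have := add_sum_erase (range (m + 2)) m.choose (by simp : 0 ∈ range (m + 2))
  rw [sum_range_succ, Nat.sum_range_choose, Nat.choose_succ_self, add_zero,
    Nat.choose_zero_right] at this
  rw [hIcc]
  omega

lemma Function.factorsThrough_of_card_image {β γ δ : Type*} [Fintype β] [DecidableEq β]
    [DecidableEq γ] {h : β → γ} {i j : β} (hij : i ≠ j) (hh : h i = h j)
    (hcard : #(univ.image h) + 1 = Fintype.card β) {f : β → δ} (hf : f i = f j) :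
    f.FactorsThrough h := by
  have himage : (univ.erase j).image h = univ.image h := by
    refine (image_subset_image (erase_subset j univ)).antisymm fun y hy => ?_
    obtain ⟨q, -, rfl⟩ := mem_image.1 hy
    by_cases hq : q = j
    · exact mem_image.2 ⟨i, mem_erase.2 ⟨hij, mem_univ i⟩, hq ▸ hh⟩
    · exact mem_image_of_mem h (mem_erase.2 ⟨hq, mem_univ q⟩)
  have hinj : Set.InjOn h ↑(univ.erase j) := by
    rw [← card_image_iff, himage, card_erase_of_mem (mem_univ j), card_univ]
    omega
  have hrep : ∀ a, ∃ a' ∈ univ.erase j, h a' = h a ∧ f a' = f a := fun a => by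
    by_cases ha : a = j
    · exact ⟨i, mem_erase.2 ⟨hij, mem_univ i⟩, ha ▸ hh, ha ▸ hf⟩
    · exact ⟨a, mem_erase.2 ⟨ha, mem_univ a⟩, rfl, rfl⟩
  intro a b hab
  obtain ⟨a', ha', hha, hfa⟩ := hrep a
  obtain ⟨b', hb', hhb, hfb⟩ := hrep b
  rw [← hfa, ← hfb, hinj ha' hb' (by rw [hha, hhb, hab])]

lemma Fin.card_image_le_of_forall_ne_zero {m : ℕ} {f : Fin (m + 1) → Fin (m + 1)}
    (hf : ∀ q, f q ≠ 0) : #(univ.image f) ≤ m := by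
  have : univ.image f ⊆ univ.erase 0 := fun y hy => by
    obtain ⟨q, -, rfl⟩ := mem_image.1 hy
    exact mem_erase.2 ⟨hf q, mem_univ _⟩
  simpa using card_le_card this

namespace DFA

section Separation

variable {α : Type} {σ : Type*} (M : DFA α σ)

/-- `A_S = M.sepLang S Sᶜ`; its left quotients are again of this form. -/
def sepLang (X Y : Finset σ) : Set (List α) :=
  {w | (∀ q ∈ X, w ∈ M.acceptsFrom q) ∧ ∀ q ∈ Y, w ∉ M.acceptsFrom q}

lemma atomInt_acceptsFrom {n : ℕ} (M : DFA α (Fin n)) (S : Finset (Fin n)) :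
    atomInt M.acceptsFrom ↑S = M.sepLang S Sᶜ := by
  ext w
  simp only [atomInt, sepLang, Set.mem_ofPred_eq, forall_and, mem_coe, mem_compl]
  exact Iff.rfl

lemma leftQuot_sepLang [DecidableEq σ] (X Y : Finset σ) (w : List α) :
    leftQuot (M.sepLang X Y) w =
      M.sepLang (X.image (M.evalFrom · w)) (Y.image (M.evalFrom · w)) := by
  ext x
  simp [leftQuot, sepLang, mem_acceptsFrom, evalFrom_of_append]

lemma quotients_sepLang [DecidableEq σ] (X Y : Finset σ) :
    quotients (M.sepLang X Y) =
      (fun f => M.sepLang (X.image f) (Y.image f)) '' Set.range fun w q => M.evalFrom q w := by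
  unfold quotients
  rw [← Set.range_comp]
  exact congrArg Set.range (funext (M.leftQuot_sepLang X Y))

end Separation

section Patterns

variable {α : Type} {σ : Type*} {M : DFA α σ}

lemma mem_sepLang_iff_of_forall {X Y Z : Finset σ} {w : List α}
    (hw : ∀ q, w ∈ M.acceptsFrom q ↔ q ∈ Z) : w ∈ M.sepLang X Y ↔ X ⊆ Z ∧ Disjoint Y Z := by
  simp only [sepLang, Set.mem_ofPred_eq, hw, subset_iff, disjoint_left]

variable (hpat : ∀ Z : Finset σ, ∃ w, ∀ q, w ∈ M.acceptsFrom q ↔ q ∈ Z)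
include hpat

lemma sepLang_eq_empty_iff {X Y : Finset σ} : M.sepLang X Y = ∅ ↔ ¬Disjoint X Y := by
  refine ⟨fun h hXY => ?_, fun h => ?_⟩
  · obtain ⟨w, hw⟩ := hpat X
    exact (h ▸ (mem_sepLang_iff_of_forall hw).2 ⟨subset_rfl, hXY.symm⟩ : w ∈ (∅ : Set _))
  · obtain ⟨q, hqX, hqY⟩ := not_disjoint_iff.1 h
    exact Set.eq_empty_of_forall_notMem fun w hw => hw.2 q hqY (hw.1 q hqX)

variable [DecidableEq σ]

lemma sepLang_subset_sepLang_iff {X Y X' Y' : Finset σ} (h : Disjoint X Y) :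
    M.sepLang X Y ⊆ M.sepLang X' Y' ↔ X' ⊆ X ∧ Y' ⊆ Y := by
  refine ⟨fun hsub => ⟨fun q hq => ?_, fun q hq => ?_⟩, ?_⟩
  · obtain ⟨w, hw⟩ := hpat X
    have := hsub ((mem_sepLang_iff_of_forall hw).2 ⟨subset_rfl, h.symm⟩)
    exact ((mem_sepLang_iff_of_forall hw).1 this).1 hq
  · by_contra hqY
    obtain ⟨w, hw⟩ := hpat (insert q X)
    have := hsub ((mem_sepLang_iff_of_forall hw).2
      ⟨subset_insert q X, disjoint_insert_right.2 ⟨hqY, h.symm⟩⟩)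
    exact disjoint_left.1 ((mem_sepLang_iff_of_forall hw).1 this).2 hq (mem_insert_self q X)
  · rintro ⟨hX, hY⟩ w ⟨h1, h2⟩
    exact ⟨fun q hq => h1 q (hX hq), fun q hq => h2 q (hY hq)⟩

lemma sepLang_compl_nonempty [Fintype σ] (S : Finset σ) : (M.sepLang S Sᶜ).Nonempty :=
  let ⟨w, hw⟩ := hpat S
  ⟨w, (mem_sepLang_iff_of_forall hw).2 ⟨subset_rfl, disjoint_compl_left⟩⟩

lemma sepLang_injOn : Set.InjOn (fun p : Finset σ × Finset σ => M.sepLang p.1 p.2)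
    {p | Disjoint p.1 p.2} := by
  intro p hp p' hp' h
  replace h : M.sepLang p.1 p.2 = M.sepLang p'.1 p'.2 := h
  have h₁ := (sepLang_subset_sepLang_iff hpat hp).1 h.le
  have h₂ := (sepLang_subset_sepLang_iff hpat hp').1 h.ge
  exact Prod.ext (h₂.1.antisymm h₁.1) (h₂.2.antisymm h₁.2)

/-- A word accepted exactly from `S` and one accepted exactly from `S ∆ {z}` are separated by
`M.sepLang S Sᶜ`, but not by a language that only constrains states other than `z`. -/
lemma sepLang_ne_sepLang_compl [Fintype σ] (S : Finset σ) {X Y : Finset σ} {z : σ}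
    (hX : z ∉ X) (hY : z ∉ Y) : M.sepLang X Y ≠ M.sepLang S Sᶜ := by
  intro h
  obtain ⟨u, hu⟩ := hpat S
  obtain ⟨v, hv⟩ := hpat (symmDiff S {z})
  have hu' := (mem_sepLang_iff_of_forall hu).1
    (h ▸ (mem_sepLang_iff_of_forall hu).2 ⟨subset_rfl, disjoint_compl_left⟩)
  have hXv : X ⊆ symmDiff S {z} := fun q hq => by
    simp [mem_symmDiff, hu'.1 hq, ne_of_mem_of_not_mem hq hX]
  have hYv : Disjoint Y (symmDiff S {z}) := disjoint_left.2 fun q hq hq' => by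
    simp only [mem_symmDiff, mem_singleton, ne_of_mem_of_not_mem hq hY] at hq'
    exact disjoint_left.1 hu'.2 hq (by tauto)
  have hv' := (mem_sepLang_iff_of_forall hv).1
    (h ▸ (mem_sepLang_iff_of_forall hv).2 ⟨hXv, hYv⟩)
  by_cases hz : z ∈ S
  · exact absurd (hv'.1 hz) (by simp [mem_symmDiff, hz])
  · exact disjoint_left.1 hv'.2 (mem_compl.2 hz) (by simp [mem_symmDiff, hz])

lemma ncard_image_sepLang (R : Finset (Finset σ × Finset σ)) :
    ((fun p : Finset σ × Finset σ => M.sepLang p.1 p.2) '' ↑R).ncard =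
      #{p ∈ R | Disjoint p.1 p.2} + if ∃ p ∈ R, ¬Disjoint p.1 p.2 then 1 else 0 := by
  set F := fun p : Finset σ × Finset σ => M.sepLang p.1 p.2
  have hinj : Set.InjOn F ↑{p ∈ R | Disjoint p.1 p.2} :=
    (sepLang_injOn hpat).mono fun p hp => (mem_filter.1 hp).2
  have hsplit : F '' ↑R = F '' ↑{p ∈ R | Disjoint p.1 p.2} ∪ F '' ↑{p ∈ R | ¬Disjoint p.1 p.2} := by
    rw [← Set.image_union, ← coe_union, filter_union_filter_not_eq]
  split_ifs with h
  · have hempty : F '' ↑{p ∈ R | ¬Disjoint p.1 p.2} = {∅} := by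
      obtain ⟨p, hp, hpd⟩ := h
      refine Set.eq_singleton_iff_unique_mem.2 ⟨⟨p, mem_filter.2 ⟨hp, hpd⟩, ?_⟩, ?_⟩
      · exact (sepLang_eq_empty_iff hpat).2 hpd
      · rintro _ ⟨p, hp, rfl⟩
        exact (sepLang_eq_empty_iff hpat).2 (mem_filter.1 hp).2
    have hnot : ∅ ∉ F '' ↑{p ∈ R | Disjoint p.1 p.2} := by
      rintro ⟨p, hp, hpe⟩
      exact (sepLang_eq_empty_iff hpat).1 hpe (mem_filter.1 hp).2
    rw [hsplit, hempty, Set.union_singleton, Set.ncard_insert_of_notMem hnot, hinj.ncard_image,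
      Set.ncard_coe_finset]
  · push Not at h
    rw [hsplit, filter_false_of_mem fun p hp => not_not.2 (h p hp), coe_empty, Set.image_empty,
      Set.union_empty, hinj.ncard_image, Set.ncard_coe_finset, add_zero]

end Patterns

section Transformations

variable {α : Type*} {m : ℕ} (M : DFA α (Fin (m + 1)))

lemma evalFrom_ne_zero (h0 : ∀ q x, M.step q x ≠ 0) {w : List α} (hw : w ≠ []) (q : Fin (m + 1)) :
    M.evalFrom q w ≠ 0 := by
  obtain ⟨w, x, rfl⟩ := (List.eq_nil_or_concat' w).resolve_left hw
  rw [evalFrom_append_singleton]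
  exact h0 _ x

def permsOnSucc : Submonoid (Equiv.Perm (Fin m)) where
  carrier := {π | ∃ w, ∀ i, M.evalFrom i.succ w = (π i).succ}
  one_mem' := ⟨[], fun _ => rfl⟩
  mul_mem' := by
    rintro π τ ⟨u, hu⟩ ⟨v, hv⟩
    exact ⟨v ++ u, fun i => by rw [evalFrom_of_append, hv, hu, Equiv.Perm.mul_apply]⟩

lemma permsOnSucc_eq_top {k : ℕ} (M : DFA α (Fin (k + 3)))
    (hrot : ∃ x, ∀ i, M.step i.succ x = (finRotate (k + 2) i).succ)
    (hswap : ∃ x, ∀ i : Fin (k + 2), M.step i.succ x = (Equiv.swap 0 1 i).succ) :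
    M.permsOnSucc = ⊤ := by
  obtain ⟨a, ha⟩ := hrot
  obtain ⟨b, hb⟩ := hswap
  have hgen : Subgroup.closure {finRotate (k + 2), Equiv.swap 0 (finRotate (k + 2) 0)} = ⊤ :=
    Equiv.Perm.closure_cycle_adjacent_swap isCycle_finRotate support_finRotate 0
  rw [finRotate_apply, zero_add] at hgen
  rw [eq_top_iff, ← Subgroup.top_toSubmonoid, ← hgen, Subgroup.closure_toSubmonoid_of_finite,
    Submonoid.closure_le, Set.insert_subset_iff, Set.singleton_subset_iff]
  exact ⟨⟨[a], ha⟩, ⟨[b], hb⟩⟩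

variable {M}

lemma exists_evalFrom_eq_of_factorsThrough (h0 : ∀ q x, M.step q x ≠ 0)
    {f g : Fin (m + 1) → Fin (m + 1)} {x : α} (hfg : ∀ q, g (M.step q x) = f q)
    (hg : ∃ w, ∀ q ≠ 0, M.evalFrom q w = g q) : ∃ w, ∀ q, M.evalFrom q w = f q := by
  obtain ⟨w, hw⟩ := hg
  exact ⟨x :: w, fun q => by rw [evalFrom_cons, hw _ (h0 q x), hfg]⟩

lemma exists_factorsThrough_step
    (hcollapse : ∀ i j : Fin (m + 1), i ≠ j →
      ∃ x, M.step i x = M.step j x ∧ #(univ.image (M.step · x)) = m)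
    {f : Fin (m + 1) → Fin (m + 1)} (hf : ∀ q, f q ≠ 0) : ∃ x, f.FactorsThrough (M.step · x) := by
  obtain ⟨i, -, j, -, hij, hfij⟩ := exists_ne_map_eq_of_card_lt_of_maps_to (s := univ)
    (by simpa using (Fin.card_image_le_of_forall_ne_zero hf).trans_lt m.lt_succ_self)
    (fun q _ => mem_image_of_mem f (mem_univ q))
  obtain ⟨x, hx, hcard⟩ := hcollapse i j hij
  exact ⟨x, factorsThrough_of_card_image hij hx (by simp [hcard]) hfij⟩

lemma exists_factor_image_insert (h0 : ∀ q x, M.step q x ≠ 0)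
    (hcollapse : ∀ i j : Fin (m + 1), i ≠ j →
      ∃ x, M.step i x = M.step j x ∧ #(univ.image (M.step · x)) = m)
    {f : Fin (m + 1) → Fin (m + 1)} (hf : ∀ q, f q ≠ 0) {v : Fin (m + 1)} (hv : v ≠ 0) :
    ∃ x, ∃ g : Fin (m + 1) → Fin (m + 1), (∀ q, g (M.step q x) = f q) ∧ (∀ q, g q ≠ 0) ∧
      univ.image g = insert v (univ.image f) := by
  obtain ⟨x, hfac⟩ := exists_factorsThrough_step hcollapse hf
  have hg0 : extend (M.step · x) f (fun _ => v) 0 = v :=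
    extend_apply' _ _ _ fun ⟨a, ha⟩ => h0 a x ha
  have himage : univ.image (extend (M.step · x) f fun _ => v) = insert v (univ.image f) := by
    ext y
    simp only [mem_image, mem_univ, true_and, mem_insert]
    constructor
    · rintro ⟨q, rfl⟩
      by_cases hq : ∃ a, M.step a x = q
      · obtain ⟨a, rfl⟩ := hq
        exact Or.inr ⟨a, (hfac.extend_apply _ a).symm⟩
      · exact Or.inl (extend_apply' _ _ _ hq)
    · rintro (rfl | ⟨a, rfl⟩)
      exacts [⟨0, hg0⟩, ⟨M.step a x, hfac.extend_apply _ a⟩]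
  refine ⟨x, _, hfac.extend_apply _, fun q => ?_, himage⟩
  rcases mem_insert.1 (himage ▸ mem_image_of_mem _ (mem_univ q)) with h | h
  · rw [h]
    exact hv
  · obtain ⟨a, -, ha⟩ := mem_image.1 h
    rw [← ha]
    exact hf a

lemma exists_evalFrom_eq_of_surjOn (hperm : M.permsOnSucc = ⊤) {g : Fin (m + 1) → Fin (m + 1)}
    (hg : ∀ q ≠ 0, g q ≠ 0) (hsurj : ∀ r ≠ 0, ∃ q ≠ 0, g q = r) :
    ∃ w, ∀ q ≠ 0, M.evalFrom q w = g q := by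
  set φ : Fin m → Fin m := fun i => (g i.succ).pred (hg _ i.succ_ne_zero)
  have hφ : Surjective φ := fun i => by
    obtain ⟨q, hq, hgq⟩ := hsurj i.succ i.succ_ne_zero
    exact ⟨q.pred hq, by simp only [φ, Fin.succ_pred, hgq, Fin.pred_succ]⟩
  obtain ⟨w, hw⟩ : Equiv.ofBijective φ ⟨Finite.injective_iff_surjective.2 hφ, hφ⟩ ∈
      M.permsOnSucc := hperm ▸ Submonoid.mem_top _
  refine ⟨w, fun q hq => ?_⟩
  rw [← Fin.succ_pred q hq, hw]
  exact Fin.succ_pred _ (hg _ (Fin.succ_ne_zero _))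

/-- Induction on `m - |im f|`: a collapsing letter factors `f` through a map with one more value
(the image of `0`), and when `f` already hits every nonzero state that map permutes them. -/
theorem exists_evalFrom_eq (h0 : ∀ q x, M.step q x ≠ 0)
    (hcollapse : ∀ i j : Fin (m + 1), i ≠ j →
      ∃ x, M.step i x = M.step j x ∧ #(univ.image (M.step · x)) = m)
    (hperm : M.permsOnSucc = ⊤) {f : Fin (m + 1) → Fin (m + 1)} (hf : ∀ q, f q ≠ 0) :
    ∃ w, ∀ q, M.evalFrom q w = f q := by
  induction hd : m - #(univ.image f) generalizing f with
  | zero =>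
    have himage : univ.image f = univ.erase 0 :=
      eq_of_subset_of_card_le (fun y hy => by
        obtain ⟨q, -, rfl⟩ := mem_image.1 hy
        exact mem_erase.2 ⟨hf q, mem_univ _⟩) (by simp; omega)
    obtain ⟨x, g, hfg, hg, -⟩ := exists_factor_image_insert h0 hcollapse hf (hf 0)
    refine exists_evalFrom_eq_of_factorsThrough h0 hfg
      (exists_evalFrom_eq_of_surjOn hperm (fun q _ => hg q) fun r hr => ?_)
    obtain ⟨p, -, rfl⟩ := mem_image.1 (himage ▸ mem_erase.2 ⟨hr, mem_univ r⟩)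
    exact ⟨M.step p x, h0 p x, hfg p⟩
  | succ d ih =>
    obtain ⟨v, hv, hvf⟩ := exists_mem_notMem_of_card_lt_card (s := univ.image f)
      (t := univ.erase (0 : Fin (m + 1))) (by simp; omega)
    obtain ⟨x, g, hfg, hg, himage⟩ := exists_factor_image_insert h0 hcollapse hf (mem_erase.1 hv).1
    obtain ⟨w, hw⟩ := ih hg (by rw [himage, card_insert_of_notMem hvf]; omega)
    exact exists_evalFrom_eq_of_factorsThrough h0 hfg ⟨w, fun q _ => hw q⟩

end Transformations

section ReachablePairs

variable {m : ℕ}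

/-- Once every map avoiding `0` is realized by a word, these are the pairs `(w(S), w(Sᶜ))` for
nonempty words `w`. -/
def reachPairs (S : Finset (Fin (m + 1))) :
    Finset (Finset (Fin (m + 1)) × Finset (Fin (m + 1))) :=
  (univ.filter fun f : Fin (m + 1) → Fin (m + 1) => ∀ q, f q ≠ 0).image
    fun f => (S.image f, Sᶜ.image f)

lemma mem_reachPairs {S : Finset (Fin (m + 1))} {p : Finset (Fin (m + 1)) × Finset (Fin (m + 1))} :
    p ∈ reachPairs S ↔ p.1 ⊆ univ.erase 0 ∧ p.2 ⊆ univ.erase 0 ∧ #p.1 ≤ #S ∧ #p.2 ≤ #Sᶜ ∧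
      (S.Nonempty → p.1.Nonempty) ∧ (Sᶜ.Nonempty → p.2.Nonempty) := by
  constructor
  · simp only [reachPairs, mem_image, mem_filter, mem_univ, true_and]
    rintro ⟨f, hf, rfl⟩
    refine ⟨?_, ?_, card_image_le, card_image_le, fun h => h.image f, fun h => h.image f⟩ <;>
    · intro y hy
      obtain ⟨q, -, rfl⟩ := mem_image.1 hy
      exact mem_erase.2 ⟨hf q, mem_univ _⟩
  · rintro ⟨h₁, h₂, hc₁, hc₂, hn₁, hn₂⟩
    obtain ⟨f₁, hf₁⟩ := exists_image_eq hc₁ hn₁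
    obtain ⟨f₂, hf₂⟩ := exists_image_eq hc₂ hn₂
    refine mem_image.2 ⟨fun q => if q ∈ S then f₁ q else f₂ q, mem_filter.2 ⟨mem_univ _, ?_⟩, ?_⟩
    · intro q
      dsimp only
      split_ifs with hq
      · exact (mem_erase.1 (h₁ (hf₁ ▸ mem_image_of_mem f₁ hq))).1
      · exact (mem_erase.1 (h₂ (hf₂ ▸ mem_image_of_mem f₂ (mem_compl.2 hq)))).1
    · exact Prod.ext ((image_congr fun q hq => if_pos hq).trans hf₁)
        ((image_congr fun q hq => if_neg (mem_compl.1 hq)).trans hf₂)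

lemma card_filter_disjoint_reachPairs (S : Finset (Fin (m + 1))) :
    #{p ∈ reachPairs S | Disjoint p.1 p.2} =
      ∑ x ∈ Icc (min 1 #S) #S, ∑ y ∈ Icc (min 1 #Sᶜ) #Sᶜ, m.choose x * (m - x).choose y := by
  have hcount := card_disjoint_pairs (univ.erase (0 : Fin (m + 1)))
    (Icc (min 1 #S) #S) (Icc (min 1 #Sᶜ) #Sᶜ)
  rw [card_erase_of_mem (mem_univ _), card_univ, Fintype.card_fin, Nat.add_sub_cancel] at hcount
  rw [← hcount]
  congr 1
  have hcard : ∀ a s : ℕ, min 1 s ≤ a ∧ a ≤ s ↔ a ≤ s ∧ (0 < s → 0 < a) := by omega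
  ext p
  simp only [mem_filter, mem_reachPairs, mem_product, mem_powerset, mem_Icc, ← card_pos, hcard]
  tauto

lemma exists_not_disjoint_reachPairs_iff (S : Finset (Fin (m + 1))) :
    (∃ p ∈ reachPairs S, ¬Disjoint p.1 p.2) ↔ S.Nonempty ∧ Sᶜ.Nonempty := by
  constructor
  · rintro ⟨p, hp, hpd⟩
    obtain ⟨f, -, rfl⟩ := mem_image.1 hp
    obtain ⟨y, hy₁, hy₂⟩ := not_disjoint_iff.1 hpd
    exact ⟨image_nonempty.1 ⟨y, hy₁⟩, image_nonempty.1 ⟨y, hy₂⟩⟩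
  · rintro ⟨⟨a, ha⟩, ⟨b, hb⟩⟩
    have hab : a ≠ b := fun h => mem_compl.1 hb (h ▸ ha)
    set v := if a = 0 then b else a
    have hv : v ≠ 0 := by
      by_cases ha0 : a = 0
      · simpa [v, ha0] using (ha0 ▸ hab).symm
      · simp [v, ha0]
    refine ⟨(S.image fun _ => v, Sᶜ.image fun _ => v),
      mem_image.2 ⟨fun _ => v, mem_filter.2 ⟨mem_univ _, fun _ => hv⟩, rfl⟩, ?_⟩
    exact not_disjoint_iff.2 ⟨v, mem_image_of_mem _ ha, mem_image_of_mem _ hb⟩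

end ReachablePairs

section AllMaps

variable {α : Type} {m : ℕ} {M : DFA α (Fin (m + 1))}
  (h0 : ∀ q x, M.step q x ≠ 0)
  (hall : ∀ f : Fin (m + 1) → Fin (m + 1), (∀ q, f q ≠ 0) → ∃ w, ∀ q, M.evalFrom q w = f q)
include hall

lemma exists_acceptance_pattern {a b : Fin (m + 1)} (ha0 : a ≠ 0) (hb0 : b ≠ 0)
    (ha : a ∈ M.accept) (hb : b ∉ M.accept) (Z : Finset (Fin (m + 1))) :
    ∃ w, ∀ q, w ∈ M.acceptsFrom q ↔ q ∈ Z := by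
  obtain ⟨w, hw⟩ := hall (fun q => if q ∈ Z then a else b) fun q => by
    split_ifs
    exacts [ha0, hb0]
  refine ⟨w, fun q => ?_⟩
  rw [mem_acceptsFrom, hw]
  split_ifs with hq <;> simp [hq, ha, hb]

include h0

lemma range_evalFrom_eq :
    Set.range (fun w q => M.evalFrom q w) = insert id {f | ∀ q, f q ≠ 0} := by
  refine Set.Subset.antisymm ?_ ?_
  · rintro _ ⟨w, rfl⟩
    rcases eq_or_ne w [] with rfl | hw
    · exact Set.mem_insert _ _
    · exact Set.mem_insert_of_mem _ (M.evalFrom_ne_zero h0 hw)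
  · rintro f (rfl | hf)
    · exact ⟨[], rfl⟩
    · obtain ⟨w, hw⟩ := hall f hf
      exact ⟨w, funext hw⟩

theorem stateComplexity_sepLang_compl
    (hpat : ∀ Z : Finset (Fin (m + 1)), ∃ w, ∀ q, w ∈ M.acceptsFrom q ↔ q ∈ Z)
    (S : Finset (Fin (m + 1))) :
    stateComplexity (M.sepLang S Sᶜ) =
      1 + (∑ x ∈ Icc (min 1 #S) #S, ∑ y ∈ Icc (min 1 #Sᶜ) #Sᶜ, m.choose x * (m - x).choose y) +
        if S.Nonempty ∧ Sᶜ.Nonempty then 1 else 0 := by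
  set F := fun p : Finset (Fin (m + 1)) × Finset (Fin (m + 1)) => M.sepLang p.1 p.2
  have hquot : quotients (M.sepLang S Sᶜ) = insert (M.sepLang S Sᶜ) (F '' ↑(reachPairs S)) := by
    rw [quotients_sepLang, range_evalFrom_eq h0 hall, Set.image_insert_eq, image_id, image_id,
      reachPairs, coe_image, coe_filter, ← Set.image_comp]
    simp only [mem_univ, true_and, Set.ofPred_forall]
    rfl
  have hnot : M.sepLang S Sᶜ ∉ F '' ↑(reachPairs S) := by
    rintro ⟨p, hp, hpS⟩
    have hp := mem_reachPairs.1 hp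
    exact sepLang_ne_sepLang_compl hpat S (fun h => (mem_erase.1 (hp.1 h)).1 rfl)
      (fun h => (mem_erase.1 (hp.2.1 h)).1 rfl) hpS
  rw [stateComplexity, Nat.card_coe_set_eq, hquot, Set.ncard_insert_of_notMem hnot,
    ncard_image_sepLang hpat, card_filter_disjoint_reachPairs]
  simp only [exists_not_disjoint_reachPairs_iff]
  omega

end AllMaps

end DFA

section PairAlphabet

variable {k : ℕ} {δ : {p : Fin (k + 3) × Fin (k + 3) // p.1 < p.2} → Fin (k + 3) → Fin (k + 3)}

lemma exists_rotation_letter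
    (ha : ∀ x : {p : Fin (k + 3) × Fin (k + 3) // p.1 < p.2},
      x.val.1.val = 0 → x.val.2.val = k + 3 - 1 →
      ∀ q, (δ x q).val = if q.val = k + 3 - 1 then 1 else q.val + 1) :
    ∃ x, ∀ i : Fin (k + 2), δ x i.succ = (finRotate (k + 2) i).succ := by
  refine ⟨⟨(0, Fin.last _), by simp [Fin.lt_def]⟩, fun i => Fin.ext ?_⟩
  rw [ha _ rfl rfl, Fin.val_succ, Fin.val_succ, coe_finRotate]
  have := i.isLt
  split_ifs with h₁ h₂ h₂ <;> simp only [Fin.ext_iff, Fin.val_last] at h₂ <;> omega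

lemma exists_swap_letter
    (hb : ∀ x : {p : Fin (k + 3) × Fin (k + 3) // p.1 < p.2},
      x.val.1.val = 0 → x.val.2.val = 1 →
      ∀ q, (δ x q).val =
        if q.val = 0 then 2 else if q.val = 1 then 2 else if q.val = 2 then 1 else q.val) :
    ∃ x, ∀ i : Fin (k + 2), δ x i.succ = (Equiv.swap 0 1 i).succ := by
  refine ⟨⟨(0, 1), by simp⟩, fun i => Fin.ext ?_⟩
  rw [hb _ rfl rfl, Fin.val_succ, Fin.val_succ]
  rcases eq_or_ne i 0 with rfl | h0
  · simp
  rcases eq_or_ne i 1 with rfl | h1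
  · simp
  rw [Equiv.swap_apply_of_ne_of_ne h0 h1]
  have : i.val ≠ 0 := fun h => h0 (Fin.ext h)
  have : i.val ≠ 1 := fun h => h1 (Fin.ext (by rw [h, Fin.val_one]))
  rw [if_neg (by omega), if_neg (by omega), if_neg (by omega)]

lemma exists_collapse_letter
    (htype : ∀ x, rank (δ x) = k + 3 - 1 ∧ δ x x.val.1 = δ x x.val.2) (i j : Fin (k + 3))
    (hij : i ≠ j) : ∃ x, δ x i = δ x j ∧ #(univ.image (δ x)) = k + 2 := by
  rcases hij.lt_or_gt with h | h
  · exact ⟨⟨(i, j), h⟩, (htype _).2, (htype _).1⟩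
  · exact ⟨⟨(j, i), h⟩, (htype _).2.symm, (htype _).1⟩

end PairAlphabet

/-- For the witness `L_n(Σ_n)` (the alphabet `Σ_n` has one letter for each pair
`i < j` of `Q_n`, inducing a transformation of type `{i,j}` avoiding `0`, with the
letters of the pairs `{0,n-1}`, `{0,1}`, `{1,n-1}`, `{0,2}` inducing `a`, `b`, `c`, `d`
respectively), every atomic intersection `A_S` is an atom, and its state complexity
meets the bounds with equality:
`κ(A_S) = 2^{n-1}` for `S ∈ {∅, Q_n}`, and
`κ(A_S) = 2 + Σ_{x=1}^{|S|} Σ_{y=1}^{n-|S|} C(n-1,x) C(n-1-x,y)` otherwise. -/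
theorem stmt10 (n : ℕ) (hn : 4 ≤ n)
    (δ : {p : Fin n × Fin n // p.1 < p.2} → Fin n → Fin n)
    (havoid : ∀ x q, (δ x q).val ≠ 0)
    (htype : ∀ x, rank (δ x) = n - 1 ∧ δ x x.val.1 = δ x x.val.2)
    (ha : ∀ x : {p : Fin n × Fin n // p.1 < p.2},
      x.val.1.val = 0 → x.val.2.val = n - 1 →
      ∀ q, (δ x q).val = if q.val = n - 1 then 1 else q.val + 1)
    (hb : ∀ x : {p : Fin n × Fin n // p.1 < p.2},
      x.val.1.val = 0 → x.val.2.val = 1 →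
      ∀ q, (δ x q).val =
        if q.val = 0 then 2 else if q.val = 1 then 2 else if q.val = 2 then 1 else q.val)
    (S : Set (Fin n)) :
    let D : DFA {p : Fin n × Fin n // p.1 < p.2} (Fin n) :=
      ⟨fun q x => δ x q, ⟨0, by omega⟩, {p : Fin n | p.val = n - 1}⟩
    let K : Fin n → Set (List {p : Fin n × Fin n // p.1 < p.2}) :=
      fun q => {w | D.evalFrom q w ∈ D.accept}
    (atomInt K S).Nonempty ∧
    ((S = ∅ ∨ S = Set.univ) → stateComplexity (atomInt K S) = 2 ^ (n - 1)) ∧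
    (S ≠ ∅ ∧ S ≠ Set.univ →
      stateComplexity (atomInt K S) =
        2 + ∑ x ∈ Finset.Icc 1 S.ncard, ∑ y ∈ Finset.Icc 1 (n - S.ncard),
          (n - 1).choose x * (n - 1 - x).choose y) := by
  intro D K
  obtain ⟨k, rfl⟩ : ∃ k, n = k + 3 := ⟨n - 3, by omega⟩
  have h0 : ∀ q x, D.step q x ≠ 0 := fun q x h => havoid x q (congrArg Fin.val h)
  have hall : ∀ f : Fin (k + 3) → Fin (k + 3), (∀ q, f q ≠ 0) → ∃ w, ∀ q, D.evalFrom q w = f q :=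
    fun f hf => D.exists_evalFrom_eq h0 (exists_collapse_letter htype)
      (D.permsOnSucc_eq_top (exists_rotation_letter ha) (exists_swap_letter hb)) hf
  have hpat := DFA.exists_acceptance_pattern hall (a := Fin.last _) (b := 1) (by simp)
    (by simp) rfl (by simp [D])
  lift S to Finset (Fin (k + 3)) using S.toFinite
  have hK : atomInt K ↑S = D.sepLang S Sᶜ := D.atomInt_acceptsFrom S
  simp only [hK, DFA.stateComplexity_sepLang_compl h0 hall hpat S, Set.ncard_coe_finset,
    coe_eq_empty, ← coe_univ, coe_inj]
  refine ⟨DFA.sepLang_compl_nonempty hpat S, ?_, ?_⟩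
  · rintro (rfl | rfl) <;> simp [Nat.sum_Icc_one_choose, Nat.add_sub_cancel' Nat.one_le_two_pow]
  · rintro ⟨hS, hSc⟩
    have hS : S.Nonempty := nonempty_iff_ne_empty.2 (by simpa using hS)
    have hSc : Sᶜ.Nonempty :=
      nonempty_iff_ne_empty.2 (by rwa [Ne, compl_eq_empty_iff, ← coe_inj])
    rw [min_eq_left (card_pos.2 hS), min_eq_left (card_pos.2 hSc), card_compl, Fintype.card_fin,
      if_pos ⟨hS, hSc⟩, add_right_comm]
    rfl
end

section
/- Let L be a non-returning regular language over an alphabet Σ of state complexity n. If every atom A_S of L meets with equality the bounds κ(A_S) = 2^{n-1} for S ∈ {∅, Q_n} and κ(A_S) = 2 + Σ_{x=1}^{|S|} Σ_{y=1}^{n-|S|} C(n-1,x)·C(n-1-x,y) for ∅ ⊊ S ⊊ Q_n, then Σ has at least n(n-1)/2 letters. -/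
/-!
Let `δ` be the transition function of the minimal DFA. The quotient of the atom `A_S` by a
nonempty word `w` is determined by the pair `(δ_w(S), δ_w(Sᶜ))`, and is empty unless the two
sets are disjoint. Since no nonempty word leads back to state `0`, the disjoint pairs that occur
consist of nonempty subsets of `Q_n ∖ {0}`, and there are at most
`∑ C(n-1,x) C(n-1-x,y)` of them. Together with `A_S` itself and `∅`, this gives the bound on
`κ(A_S)`. So an atom that meets the bound realizes every such pair.

For `S = {p, q}`, the pair `({r}, Q_n ∖ {0, r})` is realized by a word `w` that merges `p` and `q`
and no other two states. The first letter `a` of `w` is not injective, because its image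
misses `0`, and every pair that `a` merges is also merged by `w`. Hence `a` merges exactly
`{p, q}`, and distinct pairs need distinct letters.
-/

section Transitions

variable {α ι : Type}

@[simp] theorem leftQuot_nil (L : Set (List α)) : leftQuot L [] = L := by
  ext x; simp [leftQuot]

theorem leftQuot_leftQuot (L : Set (List α)) (u w : List α) :
    leftQuot (leftQuot L u) w = leftQuot L (u ++ w) := by
  ext x; simp [leftQuot, List.append_assoc]

theorem exists_transition {L : Set (List α)} {K : ι → Set (List α)}
    (hK : Set.range K = quotients L) :
    ∃ δ : List α → ι → ι, ∀ w i, K (δ w i) = leftQuot (K i) w := by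
  have h : ∀ w i, ∃ j, K j = leftQuot (K i) w := by
    intro w i
    obtain ⟨u, hu⟩ : K i ∈ quotients L := hK ▸ Set.mem_range_self i
    rw [← hu, leftQuot_leftQuot]
    exact (hK ▸ ⟨u ++ w, rfl⟩ : leftQuot L (u ++ w) ∈ Set.range K)
  choose δ hδ using h
  exact ⟨δ, hδ⟩

variable {K : ι → Set (List α)} {δ : List α → ι → ι}

theorem transition_append (hK : Function.Injective K)
    (hδ : ∀ w i, K (δ w i) = leftQuot (K i) w) (u w : List α) (i : ι) :
    δ (u ++ w) i = δ w (δ u i) :=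
  hK (by rw [hδ, hδ, hδ, leftQuot_leftQuot])

theorem transition_ne_of_nonReturning {L : Set (List α)} (hL : NonReturning L)
    (hK : Set.range K = quotients L) (hδ : ∀ w i, K (δ w i) = leftQuot (K i) w)
    {i₀ : ι} (hi₀ : K i₀ = L) : ∀ w ≠ [], ∀ i, δ w i ≠ i₀ := by
  intro w hw i
  obtain ⟨u, hu⟩ : K i ∈ quotients L := hK ▸ Set.mem_range_self i
  intro h
  have : leftQuot L (u ++ w) = L := by rw [← leftQuot_leftQuot, hu, ← hδ, h, hi₀]
  exact hL _ (by simp [hw]) this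

end Transitions

section Merging

variable {ι κ μ : Type}

def MergesExactly (f : ι → κ) (e : Sym2 ι) : Prop :=
  ∀ i j, i ≠ j → (f i = f j ↔ s(i, j) = e)

theorem MergesExactly.eq {f : ι → κ} {e e' : Sym2 ι} (h : MergesExactly f e)
    (h' : MergesExactly f e') (he : ¬ e.IsDiag) : e = e' := by
  induction e using Sym2.ind with
  | h i j =>
    have hij : i ≠ j := by simpa using he
    exact (h' i j hij).1 ((h i j hij).2 rfl)

theorem MergesExactly.of_comp {f : ι → κ} {g : κ → μ} {e : Sym2 ι}
    (h : MergesExactly (g ∘ f) e) (hf : ¬ Function.Injective f) : MergesExactly f e := by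
  obtain ⟨i, j, hij, hne⟩ := Function.not_injective_iff.mp hf
  have he : s(i, j) = e := (h i j hne).1 (congrArg g hij)
  refine fun i' j' hne' => ⟨fun h' => (h i' j' hne').1 (congrArg g h'), fun h' => ?_⟩
  rcases Sym2.eq_iff.mp (h'.trans he.symm) with ⟨rfl, rfl⟩ | ⟨rfl, rfl⟩
  exacts [hij, hij.symm]

theorem mergesExactly_of_image_eq [Fintype ι] [DecidableEq ι] [DecidableEq κ] {f : ι → κ}
    {p q : ι} {r : κ} {Y : Finset κ} (hS : ({p, q} : Finset ι).image f = {r})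
    (hSc : ({p, q}ᶜ : Finset ι).image f = Y) (hr : r ∉ Y)
    (hY : Y.card = ({p, q}ᶜ : Finset ι).card) : MergesExactly f s(p, q) := by
  have hpq : ∀ i, i = p ∨ i = q → f i = r := fun i hi =>
    Finset.mem_singleton.mp (hS ▸ Finset.mem_image_of_mem f (by simpa using hi))
  have hout : ∀ i, ¬ (i = p ∨ i = q) → f i ∈ Y := fun i hi =>
    hSc ▸ Finset.mem_image_of_mem f (by simpa using hi)
  have hinj : Set.InjOn f ↑({p, q}ᶜ : Finset ι) := Finset.card_image_iff.mp (hSc ▸ hY)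
  intro i j hij
  rw [Sym2.eq_iff]
  by_cases hi : i = p ∨ i = q <;> by_cases hj : j = p ∨ j = q
  · rw [hpq i hi, hpq j hj]; grind
  · have := hout j hj; grind
  · have := hout i hi; grind
  · refine ⟨fun h => absurd (hinj (by simp; tauto) (by simp; tauto) h) hij, ?_⟩
    grind

end Merging

section Pairs

variable {ι : Type} [DecidableEq ι]

def disjointPairs (T : Finset ι) (k m : ℕ) : Finset (Finset ι × Finset ι) :=
  (T.powerset ×ˢ T.powerset).filter fun P =>
    Disjoint P.1 P.2 ∧ P.1.Nonempty ∧ P.2.Nonempty ∧ P.1.card ≤ k ∧ P.2.card ≤ m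

theorem mem_disjointPairs {T : Finset ι} {k m : ℕ} {P : Finset ι × Finset ι} :
    P ∈ disjointPairs T k m ↔ P.1 ⊆ T ∧ P.2 ⊆ T ∧ Disjoint P.1 P.2 ∧ P.1.Nonempty ∧
      P.2.Nonempty ∧ P.1.card ≤ k ∧ P.2.card ≤ m := by
  simp only [disjointPairs, Finset.mem_filter, Finset.mem_product, Finset.mem_powerset, and_assoc]

theorem card_disjointPairs_le (T : Finset ι) (k m : ℕ) :
    (disjointPairs T k m).card ≤ ∑ x ∈ Finset.Icc 1 k, ∑ y ∈ Finset.Icc 1 m,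
      T.card.choose x * (T.card - x).choose y := by
  have hsub : disjointPairs T k m ⊆ (Finset.Icc 1 k ×ˢ Finset.Icc 1 m).biUnion fun xy =>
      (T.powersetCard xy.1).biUnion fun X => ((T \ X).powersetCard xy.2).image (Prod.mk X) := by
    rintro ⟨X, Y⟩ hP
    obtain ⟨hX, hY, hXY, hX₀, hY₀, hXk, hYm⟩ := mem_disjointPairs.mp hP
    simp only [Finset.mem_biUnion, Finset.mem_product, Finset.mem_Icc, Finset.mem_powersetCard,
      Finset.mem_image, Prod.mk.injEq]
    exact ⟨(X.card, Y.card), ⟨⟨hX₀.card_pos, hXk⟩, hY₀.card_pos, hYm⟩, X, ⟨hX, rfl⟩, Y,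
      ⟨Finset.subset_sdiff.mpr ⟨hY, hXY.symm⟩, rfl⟩, rfl, rfl⟩
  refine (Finset.card_le_card hsub).trans <| Finset.card_biUnion_le.trans ?_
  rw [Finset.sum_product]
  refine Finset.sum_le_sum fun x _ => Finset.sum_le_sum fun y _ => ?_
  refine (Finset.card_biUnion_le_card_mul _ _ ((T.card - x).choose y) fun X hX => ?_).trans_eq ?_
  · obtain ⟨hXT, hXx⟩ := Finset.mem_powersetCard.mp hX
    refine Finset.card_image_le.trans_eq ?_
    rw [Finset.card_powersetCard, Finset.card_sdiff_of_subset hXT, hXx]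
  · rw [Finset.card_powersetCard]

end Pairs

section Atoms

variable {α : Type} {n : ℕ} {K : Fin n → Set (List α)} {δ : List α → Fin n → Fin n}

def basicInt (K : Fin n → Set (List α)) (X Y : Finset (Fin n)) : Set (List α) :=
  {w | (∀ i ∈ X, w ∈ K i) ∧ ∀ i ∈ Y, w ∉ K i}

theorem leftQuot_atomInt (hδ : ∀ w i, K (δ w i) = leftQuot (K i) w) (S : Finset (Fin n))
    (w : List α) :
    leftQuot (atomInt K ↑S) w = basicInt K (S.image (δ w)) (Sᶜ.image (δ w)) := by
  have hK : ∀ i x, w ++ x ∈ K i ↔ x ∈ K (δ w i) := fun i x => by rw [hδ]; rfl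
  ext x
  simp only [leftQuot, atomInt, basicInt, Set.mem_ofPred_eq, Finset.mem_coe,
    Finset.forall_mem_image, Finset.mem_compl, hK, forall_and]

theorem basicInt_eq_empty {X Y : Finset (Fin n)} (h : ¬ Disjoint X Y) : basicInt K X Y = ∅ := by
  obtain ⟨i, hiX, hiY⟩ := Finset.not_disjoint_iff.mp h
  exact Set.eq_empty_of_forall_notMem fun w hw => hw.2 i hiY (hw.1 i hiX)

def realizedPairs (δ : List α → Fin n → Fin n) (S : Finset (Fin n)) :
    Set (Finset (Fin n) × Finset (Fin n)) :=
  {P | Disjoint P.1 P.2 ∧ ∃ w ≠ [], (S.image (δ w), Sᶜ.image (δ w)) = P}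

theorem stateComplexity_atomInt_le (hδ : ∀ w i, K (δ w i) = leftQuot (K i) w)
    (S : Finset (Fin n)) :
    stateComplexity (atomInt K ↑S) ≤ 2 + (realizedPairs δ S).ncard := by
  have hsub : quotients (atomInt K ↑S) ⊆ insert (atomInt K ↑S)
      (insert ∅ ((fun P => basicInt K P.1 P.2) '' realizedPairs δ S)) := by
    rintro _ ⟨w, rfl⟩
    rcases eq_or_ne w [] with rfl | hw
    · exact Or.inl (leftQuot_nil _)
    rw [leftQuot_atomInt hδ]
    by_cases hd : Disjoint (S.image (δ w)) (Sᶜ.image (δ w))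
    · exact Or.inr (Or.inr ⟨_, ⟨hd, w, hw, rfl⟩, rfl⟩)
    · exact Or.inr (Or.inl (basicInt_eq_empty hd))
  calc stateComplexity (atomInt K ↑S) = (quotients (atomInt K ↑S)).ncard :=
        Nat.card_coe_set_eq _
    _ ≤ _ := Set.ncard_le_ncard hsub (Set.toFinite _)
    _ ≤ 2 + (realizedPairs δ S).ncard := by
      grw [Set.ncard_insert_le, Set.ncard_insert_le, Set.ncard_image_le (Set.toFinite _)]
      omega

theorem realizedPairs_subset {T : Finset (Fin n)} (hT : ∀ w ≠ [], ∀ i, δ w i ∈ T)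
    {S : Finset (Fin n)} (hS : S.Nonempty) (hSc : Sᶜ.Nonempty) :
    realizedPairs δ S ⊆ disjointPairs T S.card Sᶜ.card := by
  rintro _ ⟨hd, w, hw, rfl⟩
  have himage : ∀ U : Finset (Fin n), U.image (δ w) ⊆ T := fun U => by
    simpa [Finset.image_subset_iff] using fun i _ => hT w hw i
  exact mem_disjointPairs.mpr ⟨himage S, himage Sᶜ, hd, hS.image _, hSc.image _,
    Finset.card_image_le, Finset.card_image_le⟩

theorem exists_word_of_le_stateComplexity_atomInt
    (hδ : ∀ w i, K (δ w i) = leftQuot (K i) w) {T : Finset (Fin n)}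
    (hT : ∀ w ≠ [], ∀ i, δ w i ∈ T) {S : Finset (Fin n)} (hS : S.Nonempty) (hSc : Sᶜ.Nonempty)
    (hκ : 2 + ∑ x ∈ Finset.Icc 1 S.card, ∑ y ∈ Finset.Icc 1 Sᶜ.card,
      T.card.choose x * (T.card - x).choose y ≤ stateComplexity (atomInt K ↑S))
    {P : Finset (Fin n) × Finset (Fin n)} (hP : P ∈ disjointPairs T S.card Sᶜ.card) :
    ∃ w ≠ [], S.image (δ w) = P.1 ∧ Sᶜ.image (δ w) = P.2 := by
  have hsub := realizedPairs_subset hT hS hSc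
  have heq : realizedPairs δ S = ↑(disjointPairs T S.card Sᶜ.card) := by
    refine Set.eq_of_subset_of_ncard_le hsub ?_ (Finset.finite_toSet _)
    have := stateComplexity_atomInt_le hδ S
    have := card_disjointPairs_le T S.card Sᶜ.card
    rw [Set.ncard_coe_finset]
    omega
  obtain ⟨-, w, hw, rfl⟩ := heq.symm ▸ Finset.mem_coe.mpr hP
  exact ⟨w, hw, rfl, rfl⟩

end Atoms

theorem exists_letter_mergesExactly {α : Type} {n : ℕ} (hn : 3 ≤ n) {K : Fin n → Set (List α)}
    (hK : Function.Injective K) {δ : List α → Fin n → Fin n}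
    (hδ : ∀ w i, K (δ w i) = leftQuot (K i) w) {z : Fin n} (hz : ∀ w ≠ [], ∀ i, δ w i ≠ z)
    (hκ : ∀ S : Finset (Fin n), S.card = 2 →
      2 + ∑ x ∈ Finset.Icc 1 2, ∑ y ∈ Finset.Icc 1 (n - 2),
        (n - 1).choose x * (n - 1 - x).choose y ≤ stateComplexity (atomInt K ↑S))
    {e : Sym2 (Fin n)} (he : ¬ e.IsDiag) : ∃ a : α, MergesExactly (δ [a]) e := by
  induction e using Sym2.ind with
  | h p q =>
  have hpq : p ≠ q := by simpa using he
  set S : Finset (Fin n) := {p, q}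
  set T : Finset (Fin n) := Finset.univ.erase z
  have hS : S.card = 2 := Finset.card_pair hpq
  have hSc : Sᶜ.card = n - 2 := by rw [Finset.card_compl, hS, Fintype.card_fin]
  have hT : T.card = n - 1 := by simp [T]
  obtain ⟨r, hr⟩ : T.Nonempty := by rw [← Finset.card_pos, hT]; omega
  have hP : ({r}, T.erase r) ∈ disjointPairs T S.card Sᶜ.card := by
    rw [mem_disjointPairs, hS, hSc, Finset.card_erase_of_mem hr, hT]
    refine ⟨by simpa using hr, Finset.erase_subset _ _, by simp, by simp, ?_, by simp, le_rfl⟩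
    rw [← Finset.card_pos, Finset.card_erase_of_mem hr, hT]; omega
  obtain ⟨w, hw, hwS, hwSc⟩ := exists_word_of_le_stateComplexity_atomInt hδ
    (fun w hw i => Finset.mem_erase.mpr ⟨hz w hw i, Finset.mem_univ _⟩) ⟨p, by simp [S]⟩
    (by rw [← Finset.card_pos, hSc]; omega) (by rw [hS, hSc, hT]; exact hκ S hS) hP
  have hmerge : MergesExactly (δ w) s(p, q) := mergesExactly_of_image_eq hwS hwSc
    (Finset.notMem_erase _ _) (by rw [Finset.card_erase_of_mem hr, hT, hSc]; omega)
  obtain ⟨a, w', rfl⟩ := List.exists_cons_of_ne_nil hw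
  have hcomp : δ w' ∘ δ [a] = δ (a :: w') :=
    funext fun i => (transition_append hK hδ [a] w' i).symm
  have hnotinj : ¬ Function.Injective (δ [a]) := fun hinj =>
    let ⟨i, hi⟩ := (Finite.injective_iff_surjective.mp hinj) z
    hz [a] (List.cons_ne_nil _ _) i hi
  exact ⟨a, (hcomp ▸ hmerge).of_comp hnotinj⟩

/-- If `L` is a non-returning language over an alphabet `Σ` of state complexity `n`
(`K` enumerates the distinct left quotients, `K 0 = L`) whose atoms all meet the
complexity bounds with equality, then `Σ` has at least `n(n-1)/2` letters. -/
theorem stmt11 {α : Type} [Fintype α] (n : ℕ) (hn : 1 ≤ n)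
    (L : Set (List α)) (hNR : NonReturning L)
    (K : Fin n → Set (List α)) (hKinj : Function.Injective K)
    (hKrange : Set.range K = quotients L) (hK0 : K ⟨0, by omega⟩ = L)
    (hbounds : ∀ S : Set (Fin n),
      ((S = ∅ ∨ S = Set.univ) → stateComplexity (atomInt K S) = 2 ^ (n - 1)) ∧
      (S ≠ ∅ ∧ S ≠ Set.univ →
        stateComplexity (atomInt K S) =
          2 + ∑ x ∈ Finset.Icc 1 S.ncard, ∑ y ∈ Finset.Icc 1 (n - S.ncard),
            (n - 1).choose x * (n - 1 - x).choose y)) :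
    n * (n - 1) / 2 ≤ Fintype.card α := by
  rw [← Nat.choose_two_right]
  obtain ⟨δ, hδ⟩ := exists_transition hKrange
  have hz := transition_ne_of_nonReturning hNR hKrange hδ hK0
  rcases lt_or_ge n 3 with hn3 | hn3
  · interval_cases n
    · simp
    obtain ⟨u, hu⟩ : K 1 ∈ quotients L := hKrange ▸ Set.mem_range_self _
    have hu₀ : u ≠ [] := by
      rintro rfl
      exact absurd (hKinj ((leftQuot_nil L ▸ hu).symm.trans hK0.symm)) (by simp)
    obtain ⟨a, -, -⟩ := List.exists_cons_of_ne_nil hu₀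
    exact Fintype.card_pos_iff.mpr ⟨a⟩
  have hκ : ∀ S : Finset (Fin n), S.card = 2 →
      2 + ∑ x ∈ Finset.Icc 1 2, ∑ y ∈ Finset.Icc 1 (n - 2),
        (n - 1).choose x * (n - 1 - x).choose y ≤ stateComplexity (atomInt K ↑S) := by
    intro S hS
    have hne : (S : Set (Fin n)) ≠ ∅ := fun h => by simp [Finset.coe_eq_empty.mp h] at hS
    have huniv : (S : Set (Fin n)) ≠ Set.univ := fun h => by
      simpa [Finset.coe_eq_univ.mp h] using hS.trans_lt (by omega : 2 < n)
    rw [(hbounds S).2 ⟨hne, huniv⟩, Set.ncard_coe_finset, hS]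
  choose f hf using fun e : {e : Sym2 (Fin n) // ¬ e.IsDiag} =>
    exists_letter_mergesExactly hn3 hKinj hδ hz hκ e.2
  calc n.choose 2 = Fintype.card {e : Sym2 (Fin n) // ¬ e.IsDiag} := by
        rw [Sym2.card_subtype_not_diag, Fintype.card_fin]
    _ ≤ Fintype.card α := Fintype.card_le_of_injective f fun e e' h =>
        Subtype.ext ((hf e).eq (h ▸ hf e') e.2)
end

section
/- Let m, n ≥ 4 with m ≠ n, and let ∘ be any of the operations union, intersection, set difference, or symmetric difference. Then κ(L'_m(a,b) ∘ L_n(a,b)) = mn - (m + n - 2), where both languages are over the alphabet {a,b} with the standard roles of a and b. -/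
/-- The two-letter alphabet `{a,b}`. -/
inductive AB : Type
  | a | b
  deriving DecidableEq

/-- The transitions of `D_n(a,b)` (states `{0,…,n-1}` embedded in `ℕ`):
`a : (1,…,n-1)(0→1)`, `b : (1,2)(0→2)`. -/
def stepStd (n : ℕ) (q : ℕ) : AB → ℕ
  | AB.a => if q = n - 1 then 1 else q + 1
  | AB.b => if q = 0 then 2 else if q = 1 then 2 else if q = 2 then 1 else q

/-- The DFA `D_n(a,b)`, initial state `0`, final state `n-1`. -/
def DnStd (n : ℕ) : DFA AB ℕ := ⟨stepStd n, 0, {n - 1}⟩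

/-- The language `L_n(a,b)`. -/
def LnStd (n : ℕ) : Set (List AB) := (DnStd n).accepts



namespace S18

/-- one-letter action on the cycle part, 0-indexed: states 1..K ↔ ZMod K -/
def sig1 (K : ℕ) : AB → Equiv.Perm (ZMod K)
  | AB.a => Equiv.addRight 1
  | AB.b => Equiv.swap 0 1

/-- word action (first letter applied first) -/
def Act1 (K : ℕ) : List AB → Equiv.Perm (ZMod K)
  | [] => 1
  | c :: w => Act1 K w * sig1 K c

lemma Act1_append (K : ℕ) (u v : List AB) : Act1 K (u ++ v) = Act1 K v * Act1 K u := by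
  induction u with
  | nil => simp [Act1]
  | cons c u ih => simp [Act1, ih, mul_assoc]

lemma Act1_cons_apply (K : ℕ) (c : AB) (w : List AB) (x : ZMod K) :
    Act1 K (c :: w) x = Act1 K w (sig1 K c x) := rfl

def encK (K : ℕ) (x : ZMod K) : ℕ := x.val + 1

lemma encK_lt (K : ℕ) [NeZero K] (x : ZMod K) : encK K x < K + 1 := by
  have := x.val_lt; simp [encK]; omega

lemma step_enc (k : ℕ) (hk : 4 ≤ k) (x : ZMod (k-1)) (c : AB) :
    stepStd k (encK (k-1) x) c = encK (k-1) (sig1 (k-1) c x) := by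
  haveI : NeZero (k-1) := ⟨by omega⟩
  have hxlt := x.val_lt
  cases c with
  | a =>
    show (if x.val + 1 = k - 1 then 1 else x.val + 1 + 1) = _
    have hval : (sig1 (k-1) AB.a x).val = (x.val + 1) % (k-1) := by
      show (x + 1).val = _
      haveI : Fact (1 < k-1) := ⟨by omega⟩
      rw [ZMod.val_add, ZMod.val_one]
    by_cases hx : x.val + 1 = k - 1
    · rw [if_pos hx]
      simp [encK, hval, hx, Nat.mod_self]
    · rw [if_neg hx]
      have : (x.val + 1) % (k-1) = x.val + 1 := Nat.mod_eq_of_lt (by omega)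
      simp [encK, hval, this]
  | b =>
    show (if x.val + 1 = 0 then 2 else if x.val + 1 = 1 then 2 else if x.val + 1 = 2 then 1 else x.val + 1) = _
    haveI : Fact (1 < k-1) := ⟨by omega⟩
    have h1 : (1 : ZMod (k-1)).val = 1 := ZMod.val_one _
    have h0 : (0 : ZMod (k-1)).val = 0 := ZMod.val_zero
    rcases Nat.lt_trichotomy x.val 1 with h | h | h
    · have hx0 : x = 0 := by
        have : x.val = 0 := by omega
        exact (ZMod.val_injective _ (by rw [this, h0]))
      subst hx0
      simp [h0, encK, sig1, Equiv.swap_apply_left, h1]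
    · have hx1 : x = 1 := ZMod.val_injective _ (by rw [h, h1])
      subst hx1
      simp [h1, encK, sig1, Equiv.swap_apply_right, h0]
    · have hne0 : x ≠ 0 := fun h' => by rw [h', h0] at h; omega
      have hne1 : x ≠ 1 := fun h' => by rw [h', h1] at h; omega
      have : sig1 (k-1) AB.b x = x := Equiv.swap_apply_of_ne_of_ne hne0 hne1
      rw [this]
      have : ¬ (x.val + 1 = 1) := by omega
      simp [encK, this, show ¬ (x.val + 1 = 2) by omega, hne0]

lemma foldl_enc (k : ℕ) (hk : 4 ≤ k) (w : List AB) (x : ZMod (k-1)) :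
    List.foldl (stepStd k) (encK (k-1) x) w = encK (k-1) (Act1 (k-1) w x) := by
  induction w generalizing x with
  | nil => simp [Act1]
  | cons c w ih =>
    rw [List.foldl_cons, step_enc k hk, ih, Act1_cons_apply]

lemma mem_LnStd (k : ℕ) (v : List AB) : v ∈ LnStd k ↔ List.foldl (stepStd k) 0 v = k - 1 := by
  show v ∈ DFA.accepts _ ↔ _
  rw [DFA.mem_accepts]
  constructor <;> intro h <;> exact h

/-- final state as ZMod element -/
def fin1 (K : ℕ) : ZMod K := ((K - 1 : ℕ) : ZMod K)

lemma fin1_val (K : ℕ) (hK : 3 ≤ K) : (fin1 K).val = K - 1 := by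
  haveI : NeZero K := ⟨by omega⟩
  exact ZMod.val_cast_of_lt (by omega)

lemma enc_eq_final_iff (k : ℕ) (hk : 4 ≤ k) (x : ZMod (k-1)) :
    encK (k-1) x = k - 1 ↔ x = fin1 (k-1) := by
  haveI : NeZero (k-1) := ⟨by omega⟩
  have hf := fin1_val (k-1) (by omega)
  constructor
  · intro h
    apply ZMod.val_injective
    rw [hf]; simp [encK] at h; omega
  · intro h; rw [h]; simp [encK, hf]; omega

end S18

namespace S18

abbrev XP (M N : ℕ) := ZMod M × ZMod N

def sigP (M N : ℕ) (c : AB) : Equiv.Perm (XP M N) := (sig1 M c).prodCongr (sig1 N c)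

def ActP (M N : ℕ) (w : List AB) : Equiv.Perm (XP M N) := (Act1 M w).prodCongr (Act1 N w)

lemma prodCongr_mul {α β : Type*} (e e' : Equiv.Perm α) (f f' : Equiv.Perm β) :
    (e.prodCongr f) * (e'.prodCongr f') = (e * e').prodCongr (f * f') :=
  Equiv.ext fun p => rfl

lemma ActP_nil (M N : ℕ) : ActP M N [] = 1 := Equiv.ext fun p => rfl

lemma ActP_cons (M N : ℕ) (c : AB) (w : List AB) :
    ActP M N (c :: w) = ActP M N w * sigP M N c := by
  exact (prodCongr_mul _ _ _ _).symm

lemma ActP_apply (M N : ℕ) (w : List AB) (p : XP M N) :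
    ActP M N w p = (Act1 M w p.1, Act1 N w p.2) := rfl

lemma ActP_append (M N : ℕ) (u v : List AB) :
    ActP M N (u ++ v) = ActP M N v * ActP M N u := by
  show ((Act1 M (u ++ v)).prodCongr (Act1 N (u ++ v))) = _
  rw [Act1_append, Act1_append]
  exact (prodCongr_mul _ _ _ _).symm

lemma ActP_append_apply (M N : ℕ) (u v : List AB) (p : XP M N) :
    ActP M N (u ++ v) p = ActP M N v (ActP M N u p) := by
  rw [ActP_append]; rfl

lemma Act1_replicate_a (K : ℕ) (t : ℕ) (x : ZMod K) :
    Act1 K (List.replicate t AB.a) x = x + t := by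
  induction t generalizing x with
  | zero => simp [Act1]
  | succ t ih =>
    rw [List.replicate_succ, Act1_cons_apply]
    show Act1 K (List.replicate t AB.a) (x + 1) = _
    rw [ih]; push_cast; ring

lemma zmod_ne_of_val_ne {K : ℕ} (a b : ZMod K) (h : a.val ≠ b.val) : a ≠ b :=
  fun e => h (by rw [e])

lemma zmod_facts (K : ℕ) (hK : 3 ≤ K) :
    (1 : ZMod K) ≠ 0 ∧ (2 : ZMod K) ≠ 0 ∧ (2 : ZMod K) ≠ 1 ∧
      (-1 : ZMod K) ≠ 0 ∧ (-1 : ZMod K) ≠ 1 := by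
  haveI : NeZero K := ⟨by omega⟩
  have hm1 : (-1 : ZMod K) = ((K - 1 : ℕ) : ZMod K) := by
    have hKz : ((K : ℕ) : ZMod K) = 0 := ZMod.natCast_self K
    push_cast [Nat.cast_sub (by omega : 1 ≤ K)]
    rw [hKz]; ring
  have h2 : (2 : ZMod K).val = 2 := by
    have : ((2 : ℕ) : ZMod K).val = 2 := ZMod.val_cast_of_lt (by omega)
    simpa using this
  have h1 : (1 : ZMod K).val = 1 := by
    have : ((1 : ℕ) : ZMod K).val = 1 := ZMod.val_cast_of_lt (by omega)
    simpa using this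
  have h0 : (0 : ZMod K).val = 0 := ZMod.val_zero
  have hK1 : (-1 : ZMod K).val = K - 1 := by
    rw [hm1]; exact ZMod.val_cast_of_lt (by omega)
  refine ⟨?_, ?_, ?_, ?_, ?_⟩ <;> apply zmod_ne_of_val_ne <;> omega

lemma avoid (K : ℕ) (hK : 3 ≤ K) (v r : ZMod K) (hr : r ≠ 0) :
    ∃ k : ℕ, (v + (k : ZMod K) * r) ≠ 0 ∧ (v + (k : ZMod K) * r) ≠ 1 := by
  obtain ⟨h10, h20, h21, hm0, hm1⟩ := zmod_facts K hK
  by_contra hcon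
  push_neg at hcon
  have H : ∀ k : ℕ, v + (k : ZMod K) * r = 0 ∨ v + (k : ZMod K) * r = 1 := by
    intro k
    by_cases h : v + (k : ZMod K) * r = 0
    · exact Or.inl h
    · exact Or.inr (hcon k h)
  have H0 := H 0; have H1 := H 1; have H2 := H 2
  simp at H0 H1 H2
  rcases H0 with h0 | h0 <;> rcases H1 with h1 | h1
  · exact hr (by linear_combination h1 - h0)
  · have hrr : r = 1 := by linear_combination h1 - h0
    rcases H2 with h2 | h2
    · rw [h0, hrr] at h2; simp at h2; exact h20 (by linear_combination h2)
    · rw [h0, hrr] at h2; simp at h2; exact h21 (by linear_combination h2)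
  · have hrr : r = -1 := by linear_combination h1 - h0
    rcases H2 with h2 | h2
    · rw [hrr] at h2; exact hm0 (by linear_combination h2 - h0)
    · rw [hrr] at h2; exact hm1 (by linear_combination h2 - h0)
  · exact hr (by linear_combination h1 - h0)

lemma rot (M N : ℕ) (hM : 0 < M) (hN : 0 < N) (s t : ℕ) :
    ∃ j : ℕ, ((s : ZMod M) + (j : ZMod M) = (t : ZMod M)) ∧
      ((s : ZMod N) + (j : ZMod N) = (t : ZMod N)) := by
  set j := t + M * N * (s + 1) - s with hj
  have hle : s + 1 ≤ M * N * (s + 1) := by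
    calc s + 1 = 1 * (s + 1) := by ring
    _ ≤ M * N * (s + 1) := Nat.mul_le_mul_right _ (Nat.mul_pos hM hN)
  have key : s + j = t + M * N * (s + 1) := by omega
  have cM : ((s + j : ℕ) : ZMod M) = (t : ZMod M) := by
    rw [key]
    have : ((t + M * N * (s + 1) : ℕ) : ZMod M)
        = (t : ZMod M) + (M : ZMod M) * (N : ZMod M) * ((s : ZMod M) + 1) := by push_cast; ring
    rw [this, ZMod.natCast_self M]; ring
  have cN : ((s + j : ℕ) : ZMod N) = (t : ZMod N) := by
    rw [key]
    have : ((t + M * N * (s + 1) : ℕ) : ZMod N)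
        = (t : ZMod N) + (M : ZMod N) * (N : ZMod N) * ((s : ZMod N) + 1) := by push_cast; ring
    rw [this, ZMod.natCast_self N]; ring
  exact ⟨j, by rw [← cM]; push_cast; ring, by rw [← cN]; push_cast; ring⟩

def Reach (M N : ℕ) (p : XP M N) : Prop := ∃ w : List AB, ActP M N w (0, 0) = p

lemma reach_a_pow (M N : ℕ) (t : ℕ) :
    ActP M N (List.replicate t AB.a) (0,0) = ((t : ZMod M), (t : ZMod N)) := by
  rw [ActP_apply]
  simp [Act1_replicate_a]

lemma swap_apply_ne {K : ℕ} (x : ZMod K) (h0 : x ≠ 0) (h1 : x ≠ 1) :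
    Equiv.swap (0 : ZMod K) 1 x = x := Equiv.swap_apply_of_ne_of_ne h0 h1

lemma Act1_b_apply (K : ℕ) (x : ZMod K) : Act1 K [AB.b] x = Equiv.swap 0 1 x := by
  show (Act1 K [] * sig1 K AB.b) x = _
  simp [Act1, sig1]

lemma pinc (M N : ℕ) (hM : 3 ≤ M) (hN : 3 ≤ N) (hnd : ¬ M ∣ N) :
    ∀ c t : ℕ, Reach M N ((t : ZMod M), (t : ZMod N) + (c : ZMod N)) := by
  haveI : NeZero M := ⟨by omega⟩
  haveI : NeZero N := ⟨by omega⟩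
  intro c
  induction c with
  | zero => intro t; exact ⟨List.replicate t AB.a, by rw [reach_a_pow]; simp⟩
  | succ c ih =>
    intro t
    have hr : (N : ZMod M) ≠ 0 := by
      rw [Ne, ZMod.natCast_eq_zero_iff]; exact hnd
    obtain ⟨k, hk0, hk1⟩ := avoid M hM ((c * (N - 1) : ℕ) : ZMod M) (N : ZMod M) hr
    obtain ⟨s, hs⟩ : ∃ s : ℕ, s = c * (N - 1) + k * N := ⟨_, rfl⟩
    have hsM : (s : ZMod M) = ((c * (N - 1) : ℕ) : ZMod M) + (k : ZMod M) * (N : ZMod M) := by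
      rw [hs]; push_cast; ring
    have hs0 : (s : ZMod M) ≠ 0 := by rw [hsM]; exact hk0
    have hs1 : (s : ZMod M) ≠ 1 := by rw [hsM]; exact hk1
    have hsN : (s : ZMod N) + (c : ZMod N) = 0 := by
      have h1 : ((N - 1 : ℕ) : ZMod N) = -1 := by
        push_cast [Nat.cast_sub (by omega : 1 ≤ N), ZMod.natCast_self N]; ring
      rw [hs]; push_cast [h1, ZMod.natCast_self N]; ring
    obtain ⟨w0, hw0⟩ := ih s
    obtain ⟨j, hjM, hjN⟩ := rot M N (by omega) (by omega) s t
    refine ⟨w0 ++ [AB.b] ++ List.replicate j AB.a, ?_⟩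
    rw [ActP_append_apply, ActP_append_apply, hw0]
    have hb : ActP M N [AB.b] ((s : ZMod M), (s : ZMod N) + (c : ZMod N))
        = ((s : ZMod M), 1) := by
      rw [ActP_apply]
      have e1 : Act1 M [AB.b] (s : ZMod M) = (s : ZMod M) := by
        rw [Act1_b_apply]; exact swap_apply_ne _ hs0 hs1
      have e2 : Act1 N [AB.b] ((s : ZMod N) + (c : ZMod N)) = 1 := by
        rw [Act1_b_apply, hsN]; simp
      show (Act1 M [AB.b] (s : ZMod M), Act1 N [AB.b] ((s : ZMod N) + (c : ZMod N))) = _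
      rw [e1, e2]
    rw [hb, ActP_apply]
    simp only [Act1_replicate_a]
    have e2 : (1 : ZMod N) + (j : ZMod N) = (t : ZMod N) + ((c+1 : ℕ) : ZMod N) := by
      push_cast
      linear_combination hjN - hsN
    have e1 : (s : ZMod M) + (j : ZMod M) = (t : ZMod M) := hjM
    show ((s : ZMod M) + (j : ZMod M), (1 : ZMod N) + (j : ZMod N)) = _
    rw [e1, e2]

lemma pdec (M N : ℕ) (hM : 3 ≤ M) (hN : 3 ≤ N) (hnd : ¬ N ∣ M) :
    ∀ c t : ℕ, Reach M N ((t : ZMod M), (t : ZMod N) - (c : ZMod N)) := by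
  haveI : NeZero M := ⟨by omega⟩
  haveI : NeZero N := ⟨by omega⟩
  intro c
  induction c with
  | zero => intro t; exact ⟨List.replicate t AB.a, by rw [reach_a_pow]; simp⟩
  | succ c ih =>
    intro t
    have hr : (M : ZMod N) ≠ 0 := by
      rw [Ne, ZMod.natCast_eq_zero_iff]; exact hnd
    obtain ⟨k, hk0, hk1⟩ := avoid N hN (-(c : ZMod N)) (M : ZMod N) hr
    obtain ⟨s, hs⟩ : ∃ s : ℕ, s = k * M := ⟨_, rfl⟩
    have hsM : (s : ZMod M) = 0 := by
      rw [hs]; push_cast [ZMod.natCast_self M]; ring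
    have hsN : (s : ZMod N) - (c : ZMod N) = -(c : ZMod N) + (k : ZMod N) * (M : ZMod N) := by
      rw [hs]; push_cast; ring
    have hy0 : (s : ZMod N) - (c : ZMod N) ≠ 0 := by rw [hsN]; exact hk0
    have hy1 : (s : ZMod N) - (c : ZMod N) ≠ 1 := by rw [hsN]; exact hk1
    obtain ⟨w0, hw0⟩ := ih s
    obtain ⟨j, hjM, hjN⟩ := rot M N (by omega) (by omega) (s + 1) t
    refine ⟨w0 ++ [AB.b] ++ List.replicate j AB.a, ?_⟩
    rw [ActP_append_apply, ActP_append_apply, hw0]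
    have hb : ActP M N [AB.b] ((s : ZMod M), (s : ZMod N) - (c : ZMod N))
        = (1, (s : ZMod N) - (c : ZMod N)) := by
      rw [ActP_apply]
      have e1 : Act1 M [AB.b] (s : ZMod M) = 1 := by
        rw [Act1_b_apply, hsM]; simp
      have e2 : Act1 N [AB.b] ((s : ZMod N) - (c : ZMod N)) = (s : ZMod N) - (c : ZMod N) := by
        rw [Act1_b_apply]; exact swap_apply_ne _ hy0 hy1
      show (Act1 M [AB.b] (s : ZMod M), Act1 N [AB.b] ((s : ZMod N) - (c : ZMod N))) = _
      rw [e1, e2]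
    rw [hb, ActP_apply]
    simp only [Act1_replicate_a]
    have h'M : ((s + 1 : ℕ) : ZMod M) + (j : ZMod M) = (t : ZMod M) := hjM
    have h'N : ((s + 1 : ℕ) : ZMod N) + (j : ZMod N) = (t : ZMod N) := hjN
    have e1 : (1 : ZMod M) + (j : ZMod M) = (t : ZMod M) := by
      push_cast at h'M
      linear_combination h'M - hsM
    have e2 : (s : ZMod N) - (c : ZMod N) + (j : ZMod N)
        = (t : ZMod N) - ((c+1 : ℕ) : ZMod N) := by
      push_cast at h'N ⊢
      linear_combination h'N
    show ((1 : ZMod M) + (j : ZMod M), (s : ZMod N) - (c : ZMod N) + (j : ZMod N)) = _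
    rw [e1, e2]

lemma reach_all (M N : ℕ) (hM : 3 ≤ M) (hN : 3 ≤ N) (hMN : M ≠ N) (p : XP M N) :
    Reach M N p := by
  haveI : NeZero M := ⟨by omega⟩
  haveI : NeZero N := ⟨by omega⟩
  by_cases hd : M ∣ N
  · have hlt : M < N := lt_of_le_of_ne (Nat.le_of_dvd (by omega) hd) hMN
    have hnd : ¬ N ∣ M := fun h => absurd (Nat.le_of_dvd (by omega) h) (by omega)
    have := pdec M N hM hN hnd (((p.1.val : ZMod N) - p.2).val) p.1.val
    rw [ZMod.natCast_rightInverse p.1, ZMod.natCast_rightInverse ((p.1.val : ZMod N) - p.2)] at this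
    simpa using this
  · have := pinc M N hM hN hd ((p.2 - (p.1.val : ZMod N)).val) p.1.val
    rw [ZMod.natCast_rightInverse p.1, ZMod.natCast_rightInverse (p.2 - (p.1.val : ZMod N))] at this
    simpa using this

end S18

namespace S18

def SG (M N : ℕ) : Subgroup (Equiv.Perm (XP M N)) :=
  Subgroup.closure {sigP M N AB.a, sigP M N AB.b}

lemma ActP_mem (M N : ℕ) (w : List AB) : ActP M N w ∈ SG M N := by
  induction w with
  | nil => rw [ActP_nil]; exact Subgroup.one_mem _
  | cons c w ih =>
    rw [ActP_cons]
    refine Subgroup.mul_mem _ ih (Subgroup.subset_closure ?_)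
    cases c
    · exact Or.inl rfl
    · exact Or.inr rfl

lemma ActP_flatten_replicate (M N : ℕ) (j : ℕ) (w : List AB) :
    ActP M N (List.flatten (List.replicate j w)) = (ActP M N w) ^ j := by
  induction j with
  | zero => simp [ActP_nil]
  | succ j ih =>
    rw [List.replicate_succ, List.flatten_cons, ActP_append, ih, pow_succ]

lemma realize (M N : ℕ) [NeZero M] [NeZero N] (σ : Equiv.Perm (XP M N)) (hσ : σ ∈ SG M N) :
    ∃ w : List AB, ActP M N w = σ := by
  induction hσ using Subgroup.closure_induction with
  | mem x hx =>
    rcases hx with h | h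
    · exact ⟨[AB.a], by rw [ActP_cons, ActP_nil, one_mul, h]⟩
    · exact ⟨[AB.b], by rw [ActP_cons, ActP_nil, one_mul, h]⟩
  | one => exact ⟨[], ActP_nil M N⟩
  | mul x y hx hy ihx ihy =>
    obtain ⟨wx, hwx⟩ := ihx
    obtain ⟨wy, hwy⟩ := ihy
    exact ⟨wy ++ wx, by rw [ActP_append, hwx, hwy]⟩
  | inv x hx ihx =>
    obtain ⟨w, hw⟩ := ihx
    refine ⟨List.flatten (List.replicate (orderOf x - 1) w), ?_⟩
    rw [ActP_flatten_replicate, hw]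
    have hpos : 0 < orderOf x := orderOf_pos x
    have : x * x ^ (orderOf x - 1) = 1 := by
      rw [← pow_succ']
      have : orderOf x - 1 + 1 = orderOf x := by omega
      rw [this, pow_orderOf_eq_one]
    exact inv_eq_of_mul_eq_one_right this |>.symm ▸ (eq_inv_of_mul_eq_one_right this)

lemma trans_sg (M N : ℕ) (hM : 3 ≤ M) (hN : 3 ≤ N) (hMN : M ≠ N) (p q : XP M N) :
    ∃ σ ∈ SG M N, σ p = q := by
  obtain ⟨wp, hwp⟩ := reach_all M N hM hN hMN p
  obtain ⟨wq, hwq⟩ := reach_all M N hM hN hMN q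
  refine ⟨ActP M N wq * (ActP M N wp)⁻¹, Subgroup.mul_mem _ (ActP_mem M N wq)
    (Subgroup.inv_mem _ (ActP_mem M N wp)), ?_⟩
  have : (ActP M N wp)⁻¹ p = (0, 0) := by
    rw [← hwp]; exact Equiv.symm_apply_apply _ _
  show ActP M N wq ((ActP M N wp)⁻¹ p) = q
  rw [this, hwq]

/-- fibers of evaluation maps over the subgroup all have the same cardinality -/
lemma fiber_card (M N : ℕ) (hM : 3 ≤ M) (hN : 3 ≤ N) (hMN : M ≠ N)
    (γ q : XP M N) :
    {σ : ↥(SG M N) | (σ : Equiv.Perm (XP M N)) γ = q}.ncard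
      = {σ : ↥(SG M N) | (σ : Equiv.Perm (XP M N)) (0,0) = (0,0)}.ncard := by
  classical
  obtain ⟨τ, hτmem, hτ⟩ := trans_sg M N hM hN hMN γ (0, 0)
  obtain ⟨ρ, hρmem, hρ⟩ := trans_sg M N hM hN hMN (0, 0) q
  set T : ↥(SG M N) := ⟨τ, hτmem⟩
  set R : ↥(SG M N) := ⟨ρ, hρmem⟩
  have himg : {σ : ↥(SG M N) | (σ : Equiv.Perm (XP M N)) γ = q}
      = (fun σ => R * σ * T) '' {σ : ↥(SG M N) | (σ : Equiv.Perm (XP M N)) (0,0) = (0,0)} := by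
    ext σ'
    simp only [Set.mem_image, Set.mem_setOf_eq]
    constructor
    · intro h
      refine ⟨R⁻¹ * σ' * T⁻¹, ?_, by group⟩
      show (ρ⁻¹ * (σ' : Equiv.Perm (XP M N)) * τ⁻¹) (0,0) = (0,0)
      have hτinv : (τ⁻¹ : Equiv.Perm (XP M N)) (0,0) = γ := by
        rw [← hτ]; exact Equiv.symm_apply_apply _ _
      have hρinv : (ρ⁻¹ : Equiv.Perm (XP M N)) q = (0,0) := by
        rw [← hρ]; exact Equiv.symm_apply_apply _ _
      show ρ⁻¹ ((σ' : Equiv.Perm (XP M N)) (τ⁻¹ (0,0))) = (0,0)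
      rw [hτinv, h, hρinv]
    · rintro ⟨σ, hσ, rfl⟩
      show (ρ * (σ : Equiv.Perm (XP M N)) * τ) γ = q
      show ρ ((σ : Equiv.Perm (XP M N)) (τ γ)) = q
      rw [hτ, hσ, hρ]
  rw [himg]
  apply Set.ncard_image_of_injective
  intro x y h
  simpa using mul_left_cancel (mul_right_cancel h)

lemma master (M N : ℕ) (hM : 3 ≤ M) (hN : 3 ≤ N) (hMN : M ≠ N)
    (α β bb : XP M N) (A : Set (XP M N)) (hA : 2 ≤ A.ncard) :
    ∃ w : List AB, ActP M N w α ∈ A ∧ ActP M N w β ≠ bb := by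
  classical
  haveI : NeZero M := ⟨by omega⟩
  haveI : NeZero N := ⟨by omega⟩
  set c0 := {σ : ↥(SG M N) | (σ : Equiv.Perm (XP M N)) (0,0) = (0,0)}.ncard with hc0
  have hc0pos : 0 < c0 := by
    rw [hc0]
    rw [Set.ncard_pos (Set.toFinite _)]
    exact ⟨1, rfl⟩
  obtain ⟨q₁, hq₁, q₂, hq₂, hqne⟩ := (Set.one_lt_ncard (Set.toFinite A)).mp (by omega)
  set F1 : Set ↥(SG M N) := {σ | (σ : Equiv.Perm (XP M N)) α = q₁} with hF1
  set F2 : Set ↥(SG M N) := {σ | (σ : Equiv.Perm (XP M N)) α = q₂} with hF2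
  set SA : Set ↥(SG M N) := {σ | (σ : Equiv.Perm (XP M N)) α ∈ A} with hSA
  set SB : Set ↥(SG M N) := {σ | (σ : Equiv.Perm (XP M N)) β = bb} with hSB
  have hdisj : Disjoint F1 F2 := by
    rw [Set.disjoint_left]
    intro σ h1 h2
    rw [hF1] at h1; rw [hF2] at h2
    exact hqne (h1.symm.trans h2)
  have hsub : F1 ∪ F2 ⊆ SA := by
    rintro σ (h | h)
    · show (σ : Equiv.Perm (XP M N)) α ∈ A; rw [h]; exact hq₁
    · show (σ : Equiv.Perm (XP M N)) α ∈ A; rw [h]; exact hq₂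
  have hU : (F1 ∪ F2).ncard = 2 * c0 := by
    rw [Set.ncard_union_eq hdisj (Set.toFinite _) (Set.toFinite _), hF1, hF2,
      fiber_card M N hM hN hMN α q₁, fiber_card M N hM hN hMN α q₂]
    omega
  have hSBcard : SB.ncard = c0 := fiber_card M N hM hN hMN β bb
  have : ¬ (SA ⊆ SB) := by
    intro hss
    have h1 : SA.ncard ≤ c0 := hSBcard ▸ Set.ncard_le_ncard hss (Set.toFinite _)
    have h2 : 2 * c0 ≤ SA.ncard := hU ▸ Set.ncard_le_ncard hsub (Set.toFinite _)
    omega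
  obtain ⟨σ, hσA, hσB⟩ := Set.not_subset.mp this
  obtain ⟨w, hw⟩ := realize M N (σ : Equiv.Perm (XP M N)) σ.2
  refine ⟨w, ?_, ?_⟩
  · rw [hw]; exact hσA
  · rw [hw]; exact hσB

lemma transitive_word (M N : ℕ) (hM : 3 ≤ M) (hN : 3 ≤ N) (hMN : M ≠ N) (p q : XP M N) :
    ∃ w : List AB, ActP M N w p = q := by
  haveI : NeZero M := ⟨by omega⟩
  haveI : NeZero N := ⟨by omega⟩
  obtain ⟨σ, hσ, h⟩ := trans_sg M N hM hN hMN p q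
  obtain ⟨w, hw⟩ := realize M N σ hσ
  exact ⟨w, by rw [hw, h]⟩

end S18

namespace S18

/-! ### separation lemmas -/

lemma sep1 (M N : ℕ) (hM : 3 ≤ M) (hN : 3 ≤ N) (hMN : M ≠ N)
    {x x' : ZMod M} (y y' : ZMod N) (hx : x ≠ x') :
    ∃ w : List AB, Act1 M w x = fin1 M ∧ Act1 N w y ≠ fin1 N ∧
      Act1 M w x' ≠ fin1 M ∧ Act1 N w y' ≠ fin1 N := by
  haveI : NeZero M := ⟨by omega⟩
  haveI : NeZero N := ⟨by omega⟩
  obtain ⟨h10, h20, h21, _, _⟩ := zmod_facts N hN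
  set A : Set (XP M N) := {p | p.1 = fin1 M ∧ p.2 ≠ fin1 N} with hA
  have hp1 : ((fin1 M, fin1 N + 1) : XP M N) ∈ A :=
    ⟨rfl, fun e => h10 (by linear_combination e)⟩
  have hp2 : ((fin1 M, fin1 N + 2) : XP M N) ∈ A :=
    ⟨rfl, fun e => h20 (by linear_combination e)⟩
  have hne12 : ((fin1 M, fin1 N + 1) : XP M N) ≠ (fin1 M, fin1 N + 2) := by
    intro e
    have := congrArg Prod.snd e
    exact h21 (by linear_combination - this)
  have hcard : 2 ≤ A.ncard := by
    have h2 : ({((fin1 M, fin1 N + 1) : XP M N), (fin1 M, fin1 N + 2)} : Set (XP M N)).ncard = 2 :=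
      Set.ncard_pair hne12
    rw [← h2]
    apply Set.ncard_le_ncard _ (Set.toFinite _)
    intro p hp
    rcases hp with rfl | rfl
    · exact hp1
    · exact hp2
  obtain ⟨w, hin, hneq⟩ := master M N hM hN hMN (x, y) (x, y') (fin1 M, fin1 N) A hcard
  rw [ActP_apply] at hin hneq
  obtain ⟨c1, c2⟩ := hin
  refine ⟨w, c1, c2, ?_, ?_⟩
  · intro hc
    exact hx ((Act1 M w).injective (hc.trans c1.symm)).symm
  · intro hc
    exact hneq (by rw [Prod.ext_iff]; exact ⟨c1, hc⟩)

lemma sep2 (M N : ℕ) (hM : 3 ≤ M) (hN : 3 ≤ N) (hMN : M ≠ N)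
    (x x' : ZMod M) {y y' : ZMod N} (hy : y ≠ y') :
    ∃ w : List AB, Act1 M w x ≠ fin1 M ∧ Act1 N w y = fin1 N ∧
      Act1 M w x' ≠ fin1 M ∧ Act1 N w y' ≠ fin1 N := by
  haveI : NeZero M := ⟨by omega⟩
  haveI : NeZero N := ⟨by omega⟩
  obtain ⟨h10, h20, h21, _, _⟩ := zmod_facts M hM
  set A : Set (XP M N) := {p | p.1 ≠ fin1 M ∧ p.2 = fin1 N} with hA
  have hp1 : ((fin1 M + 1, fin1 N) : XP M N) ∈ A :=
    ⟨fun e => h10 (by linear_combination e), rfl⟩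
  have hp2 : ((fin1 M + 2, fin1 N) : XP M N) ∈ A :=
    ⟨fun e => h20 (by linear_combination e), rfl⟩
  have hne12 : ((fin1 M + 1, fin1 N) : XP M N) ≠ (fin1 M + 2, fin1 N) := by
    intro e
    have := congrArg Prod.fst e
    exact h21 (by linear_combination - this)
  have hcard : 2 ≤ A.ncard := by
    have h2 : ({((fin1 M + 1, fin1 N) : XP M N), (fin1 M + 2, fin1 N)} : Set (XP M N)).ncard = 2 :=
      Set.ncard_pair hne12
    rw [← h2]
    apply Set.ncard_le_ncard _ (Set.toFinite _)
    intro p hp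
    rcases hp with rfl | rfl
    · exact hp1
    · exact hp2
  obtain ⟨w, hin, hneq⟩ := master M N hM hN hMN (x, y) (x', y) (fin1 M, fin1 N) A hcard
  rw [ActP_apply] at hin hneq
  obtain ⟨c1, c2⟩ := hin
  refine ⟨w, c1, c2, ?_, ?_⟩
  · intro hc
    exact hneq (by rw [Prod.ext_iff]; exact ⟨hc, c2⟩)
  · intro hc
    exact hy ((Act1 N w).injective (c2.trans hc.symm))

lemma sep3 (M N : ℕ) (hM : 3 ≤ M) (hN : 3 ≤ N) (hMN : M ≠ N) (x : ZMod M) (y : ZMod N) :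
    ∃ w : List AB, Act1 M w x = fin1 M ∧ Act1 N w y = fin1 N := by
  obtain ⟨w, hw⟩ := transitive_word M N hM hN hMN (x, y) (fin1 M, fin1 N)
  rw [ActP_apply, Prod.ext_iff] at hw
  exact ⟨w, hw.1, hw.2⟩

/-! ### quotient structure -/

def PhiS (M N : ℕ) (o : Prop → Prop → Prop) (p : XP M N) : Set (List AB) :=
  {v | o (Act1 M v p.1 = fin1 M) (Act1 N v p.2 = fin1 N)}

def Phi (m n : ℕ) (o : Prop → Prop → Prop) : Option (XP (m-1) (n-1)) → Set (List AB)
  | none => {v | o (v ∈ LnStd m) (v ∈ LnStd n)}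
  | some p => PhiS (m-1) (n-1) o p

def init1 (K : ℕ) : AB → ZMod K
  | AB.a => 0
  | AB.b => 1

lemma step0 (m : ℕ) (hm : 4 ≤ m) (c : AB) :
    stepStd m 0 c = encK (m-1) (init1 (m-1) c) := by
  haveI : Fact (1 < m - 1) := ⟨by omega⟩
  cases c
  · show (if 0 = m - 1 then 1 else 0 + 1) = _
    rw [if_neg (by omega)]
    simp [encK, init1]
  · show (if (0:ℕ) = 0 then 2 else if (0:ℕ) = 1 then 2 else if (0:ℕ) = 2 then 1 else 0) = _
    rw [if_pos rfl]
    simp [encK, init1, ZMod.val_one]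

lemma mem_cons (m : ℕ) (hm : 4 ≤ m) (c : AB) (u : List AB) :
    (c :: u) ∈ LnStd m ↔ Act1 (m-1) u (init1 (m-1) c) = fin1 (m-1) := by
  rw [mem_LnStd, List.foldl_cons, step0 m hm c, foldl_enc m hm, enc_eq_final_iff m hm]

lemma quot_nil {α : Type} (L : Set (List α)) : leftQuot L [] = L := by
  ext v; simp [leftQuot]

lemma quot_cons (m n : ℕ) (hm : 4 ≤ m) (hn : 4 ≤ n) (o : Prop → Prop → Prop)
    (c : AB) (w : List AB) :
    leftQuot (Phi m n o none) (c :: w)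
      = Phi m n o (some (ActP (m-1) (n-1) w (init1 (m-1) c, init1 (n-1) c))) := by
  ext v
  show o ((c :: w) ++ v ∈ LnStd m) ((c :: w) ++ v ∈ LnStd n) ↔ _
  have e1 : ((c :: w) ++ v ∈ LnStd m)
      = (Act1 (m-1) v (ActP (m-1) (n-1) w (init1 (m-1) c, init1 (n-1) c)).1 = fin1 (m-1)) := by
    apply propext
    show ((c :: (w ++ v)) ∈ LnStd m) ↔ _
    rw [mem_cons m hm, Act1_append]
    exact Iff.rfl
  have e2 : ((c :: w) ++ v ∈ LnStd n)
      = (Act1 (n-1) v (ActP (m-1) (n-1) w (init1 (m-1) c, init1 (n-1) c)).2 = fin1 (n-1)) := by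
    apply propext
    show ((c :: (w ++ v)) ∈ LnStd n) ↔ _
    rw [mem_cons n hn, Act1_append]
    exact Iff.rfl
  rw [e1, e2]
  exact Iff.rfl

lemma quot_some (M N : ℕ) (o : Prop → Prop → Prop) (p : XP M N) (u : List AB) :
    leftQuot (PhiS M N o p) u = PhiS M N o (ActP M N u p) := by
  ext v
  show o (Act1 M (u ++ v) p.1 = fin1 M) (Act1 N (u ++ v) p.2 = fin1 N) ↔ _
  rw [Act1_append, Act1_append]
  exact Iff.rfl

lemma range_quot (m n : ℕ) (hm : 4 ≤ m) (hn : 4 ≤ n) (hmn : m ≠ n) (o : Prop → Prop → Prop) :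
    Set.range (leftQuot (Phi m n o none)) = Set.range (Phi m n o) := by
  have hM : 3 ≤ m - 1 := by omega
  have hN : 3 ≤ n - 1 := by omega
  have hMN : m - 1 ≠ n - 1 := by omega
  apply Set.eq_of_subset_of_subset
  · rintro S ⟨w, rfl⟩
    cases w with
    | nil => exact ⟨none, (quot_nil _).symm⟩
    | cons c w => exact ⟨some (ActP (m-1) (n-1) w (init1 (m-1) c, init1 (n-1) c)),
        (quot_cons m n hm hn o c w).symm⟩
  · rintro S ⟨q, rfl⟩
    cases q with
    | none => exact ⟨[], quot_nil _⟩
    | some p =>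
      obtain ⟨w, hw⟩ := reach_all (m-1) (n-1) hM hN hMN p
      refine ⟨AB.a :: w, ?_⟩
      rw [quot_cons m n hm hn o AB.a w]
      show Phi m n o (some (ActP (m-1) (n-1) w ((0 : ZMod (m-1)), (0 : ZMod (n-1))))) = _
      rw [hw]

/-! ### injectivity -/

lemma act1_a_apply (K : ℕ) (x : ZMod K) : Act1 K [AB.a] x = x + 1 := by
  show (Act1 K [] * sig1 K AB.a) x = _
  simp [Act1, sig1]

lemma inj_phi (m n : ℕ) (hm : 4 ≤ m) (hn : 4 ≤ n) (hmn : m ≠ n) (o : Prop → Prop → Prop)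
    (hsome : ∀ p p' : XP (m-1) (n-1), PhiS (m-1) (n-1) o p = PhiS (m-1) (n-1) o p' → p = p') :
    Function.Injective (Phi m n o) := by
  have hM : 3 ≤ m - 1 := by omega
  have hN : 3 ≤ n - 1 := by omega
  haveI : NeZero (m-1) := ⟨by omega⟩
  haveI : NeZero (n-1) := ⟨by omega⟩
  obtain ⟨_, h20M, _, hm0M, hm1M⟩ := zmod_facts (m-1) hM
  obtain ⟨_, _, _, hm0N, hm1N⟩ := zmod_facts (n-1) hN
  have key : ∀ p : XP (m-1) (n-1), Phi m n o none ≠ Phi m n o (some p) := by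
    intro p h
    have h1 : Phi m n o (some ((0 : ZMod (m-1)), (0 : ZMod (n-1))))
        = PhiS (m-1) (n-1) o (ActP (m-1) (n-1) [AB.a] p) := by
      have := congrArg (fun L => leftQuot L [AB.a]) h
      rw [quot_cons m n hm hn o AB.a []] at this
      rw [show leftQuot (Phi m n o (some p)) [AB.a] = PhiS (m-1) (n-1) o (ActP (m-1) (n-1) [AB.a] p)
        from quot_some (m-1) (n-1) o p [AB.a]] at this
      rw [← this]
      show Phi m n o (some (ActP (m-1) (n-1) [] ((0:ZMod (m-1)), (0:ZMod (n-1))))) = _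
      rw [ActP_nil]
      rfl
    have hp : p = (-1, -1) := by
      have := hsome _ _ h1
      have e1 : (0 : ZMod (m-1)) = Act1 (m-1) [AB.a] p.1 := congrArg Prod.fst this
      have e2 : (0 : ZMod (n-1)) = Act1 (n-1) [AB.a] p.2 := congrArg Prod.snd this
      rw [act1_a_apply] at e1 e2
      have : p.1 = -1 := by linear_combination - e1
      have h2 : p.2 = -1 := by linear_combination - e2
      rw [Prod.ext_iff]
      exact ⟨this, h2⟩
    have h2 : Phi m n o (some ((1 : ZMod (m-1)), (1 : ZMod (n-1))))
        = PhiS (m-1) (n-1) o (ActP (m-1) (n-1) [AB.b] p) := by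
      have := congrArg (fun L => leftQuot L [AB.b]) h
      rw [quot_cons m n hm hn o AB.b []] at this
      rw [show leftQuot (Phi m n o (some p)) [AB.b] = PhiS (m-1) (n-1) o (ActP (m-1) (n-1) [AB.b] p)
        from quot_some (m-1) (n-1) o p [AB.b]] at this
      rw [← this]
      show Phi m n o (some (ActP (m-1) (n-1) [] ((1:ZMod (m-1)), (1:ZMod (n-1))))) = _
      rw [ActP_nil]
      rfl
    have hb : ActP (m-1) (n-1) [AB.b] p = (-1, -1) := by
      rw [hp, ActP_apply]
      rw [Act1_b_apply, Act1_b_apply]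
      rw [swap_apply_ne _ hm0M hm1M, swap_apply_ne _ hm0N hm1N]
    rw [hb] at h2
    have := hsome _ _ h2
    have e1 : (1 : ZMod (m-1)) = -1 := congrArg Prod.fst this
    exact h20M (by linear_combination e1)
  intro q q' h
  cases q with
  | none =>
    cases q' with
    | none => rfl
    | some p => exact absurd h (key p)
  | some p =>
    cases q' with
    | none => exact absurd h.symm (key p)
    | some p' => rw [hsome p p' h]

/-! ### counting -/

lemma count (m n : ℕ) (hm : 4 ≤ m) (hn : 4 ≤ n) (hmn : m ≠ n) (o : Prop → Prop → Prop)
    (hsome : ∀ p p' : XP (m-1) (n-1), PhiS (m-1) (n-1) o p = PhiS (m-1) (n-1) o p' → p = p') :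
    stateComplexity (Phi m n o none) = m * n - (m + n - 2) := by
  haveI : NeZero (m-1) := ⟨by omega⟩
  haveI : NeZero (n-1) := ⟨by omega⟩
  have hinj := inj_phi m n hm hn hmn o hsome
  show Nat.card (Set.range (leftQuot (Phi m n o none))) = _
  rw [range_quot m n hm hn hmn o, Nat.card_range_of_injective hinj]
  rw [Nat.card_eq_fintype_card]
  rw [Fintype.card_option, Fintype.card_prod, ZMod.card, ZMod.card]
  obtain ⟨m', rfl⟩ : ∃ k, m = k + 4 := ⟨m - 4, by omega⟩
  obtain ⟨n', rfl⟩ : ∃ k, n = k + 4 := ⟨n - 4, by omega⟩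
  have e1 : (m' + 4 - 1) * (n' + 4 - 1) = m' * n' + 3 * m' + 3 * n' + 9 := by
    show (m' + 3) * (n' + 3) = _
    ring
  have e2 : (m' + 4) * (n' + 4) = m' * n' + 4 * m' + 4 * n' + 16 := by ring
  omega

end S18

namespace S18

section ops

variable (M N : ℕ)

lemma case_split {p p' : XP M N} (hne : p ≠ p') :
    p.1 ≠ p'.1 ∨ (p.1 = p'.1 ∧ p.2 ≠ p'.2) := by
  rcases eq_or_ne p.1 p'.1 with h1 | h1
  · refine Or.inr ⟨h1, fun h2 => hne ?_⟩
    exact Prod.ext h1 h2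
  · exact Or.inl h1

lemma injS_or (hM : 3 ≤ M) (hN : 3 ≤ N) (hMN : M ≠ N) (p p' : XP M N)
    (h : PhiS M N (fun P Q => P ∨ Q) p = PhiS M N (fun P Q => P ∨ Q) p') : p = p' := by
  by_contra hne
  rcases case_split M N hne with hx | ⟨hx, hy⟩
  · obtain ⟨w, c1, c2, c3, c4⟩ := sep1 M N hM hN hMN p.2 p'.2 hx
    have hw : w ∈ PhiS M N (fun P Q => P ∨ Q) p := Or.inl c1
    rw [h] at hw
    rcases hw with hc | hc
    · exact c3 hc
    · exact c4 hc
  · obtain ⟨w, c1, c2, c3, c4⟩ := sep2 M N hM hN hMN p.1 p'.1 hy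
    have hw : w ∈ PhiS M N (fun P Q => P ∨ Q) p := Or.inr c2
    rw [h] at hw
    rcases hw with hc | hc
    · exact c3 hc
    · exact c4 hc

lemma injS_and (hM : 3 ≤ M) (hN : 3 ≤ N) (hMN : M ≠ N) (p p' : XP M N)
    (h : PhiS M N (fun P Q => P ∧ Q) p = PhiS M N (fun P Q => P ∧ Q) p') : p = p' := by
  by_contra hne
  obtain ⟨w, c1, c2⟩ := sep3 M N hM hN hMN p.1 p.2
  have hw : w ∈ PhiS M N (fun P Q => P ∧ Q) p := ⟨c1, c2⟩
  rw [h] at hw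
  obtain ⟨d1, d2⟩ := hw
  have e1 : p.1 = p'.1 := (Act1 M w).injective (c1.trans d1.symm)
  have e2 : p.2 = p'.2 := (Act1 N w).injective (c2.trans d2.symm)
  exact hne (Prod.ext e1 e2)

lemma injS_diff (hM : 3 ≤ M) (hN : 3 ≤ N) (hMN : M ≠ N) (p p' : XP M N)
    (h : PhiS M N (fun P Q => P ∧ ¬Q) p = PhiS M N (fun P Q => P ∧ ¬Q) p') : p = p' := by
  by_contra hne
  rcases case_split M N hne with hx | ⟨hx, hy⟩
  · obtain ⟨w, c1, c2, c3, c4⟩ := sep1 M N hM hN hMN p.2 p'.2 hx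
    have hw : w ∈ PhiS M N (fun P Q => P ∧ ¬Q) p := ⟨c1, c2⟩
    rw [h] at hw
    exact c3 hw.1
  · obtain ⟨w, c1, c2⟩ := sep3 M N hM hN hMN p.1 p.2
    have hy' : Act1 N w p'.2 ≠ fin1 N := by
      intro hc
      exact hy ((Act1 N w).injective (c2.trans hc.symm))
    have hw : w ∈ PhiS M N (fun P Q => P ∧ ¬Q) p' := by
      refine ⟨?_, hy'⟩
      rw [← hx]
      exact c1
    rw [← h] at hw
    exact hw.2 c2

lemma injS_xor (hM : 3 ≤ M) (hN : 3 ≤ N) (hMN : M ≠ N) (p p' : XP M N)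
    (h : PhiS M N (fun P Q => (P ∧ ¬Q) ∨ (Q ∧ ¬P)) p
       = PhiS M N (fun P Q => (P ∧ ¬Q) ∨ (Q ∧ ¬P)) p') : p = p' := by
  by_contra hne
  rcases case_split M N hne with hx | ⟨hx, hy⟩
  · obtain ⟨w, c1, c2, c3, c4⟩ := sep1 M N hM hN hMN p.2 p'.2 hx
    have hw : w ∈ PhiS M N (fun P Q => (P ∧ ¬Q) ∨ (Q ∧ ¬P)) p := Or.inl ⟨c1, c2⟩
    rw [h] at hw
    rcases hw with ⟨d1, _⟩ | ⟨d1, _⟩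
    · exact c3 d1
    · exact c4 d1
  · obtain ⟨w, c1, c2, c3, c4⟩ := sep2 M N hM hN hMN p.1 p'.1 hy
    have hw : w ∈ PhiS M N (fun P Q => (P ∧ ¬Q) ∨ (Q ∧ ¬P)) p := Or.inr ⟨c2, c1⟩
    rw [h] at hw
    rcases hw with ⟨d1, _⟩ | ⟨d1, _⟩
    · exact c3 d1
    · exact c4 d1

end ops

end S18


/-- For `m ≠ n`, each of the four proper boolean operations applied to `L'_m(a,b)` and
`L_n(a,b)` (both with the standard roles of `a` and `b`) yields a language of state
complexity exactly `mn - (m + n - 2)`. -/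
theorem stmt18 (m n : ℕ) (hm : 4 ≤ m) (hn : 4 ≤ n) (hmn : m ≠ n) :
    stateComplexity (LnStd m ∪ LnStd n) = m * n - (m + n - 2) ∧
    stateComplexity (LnStd m ∩ LnStd n) = m * n - (m + n - 2) ∧
    stateComplexity (LnStd m \ LnStd n) = m * n - (m + n - 2) ∧
    stateComplexity (symmDiff (LnStd m) (LnStd n)) = m * n - (m + n - 2) := by
  have hM : 3 ≤ m - 1 := by omega
  have hN : 3 ≤ n - 1 := by omega
  have hMN : m - 1 ≠ n - 1 := by omega
  refine ⟨?_, ?_, ?_, ?_⟩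
  · have he : LnStd m ∪ LnStd n = S18.Phi m n (fun P Q => P ∨ Q) none := rfl
    rw [he]
    exact S18.count m n hm hn hmn _ (S18.injS_or (m-1) (n-1) hM hN hMN)
  · have he : LnStd m ∩ LnStd n = S18.Phi m n (fun P Q => P ∧ Q) none := rfl
    rw [he]
    exact S18.count m n hm hn hmn _ (S18.injS_and (m-1) (n-1) hM hN hMN)
  · have he : LnStd m \ LnStd n = S18.Phi m n (fun P Q => P ∧ ¬Q) none := rfl
    rw [he]
    exact S18.count m n hm hn hmn _ (S18.injS_diff (m-1) (n-1) hM hN hMN)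
  · have he : symmDiff (LnStd m) (LnStd n)
        = S18.Phi m n (fun P Q => (P ∧ ¬Q) ∨ (Q ∧ ¬P)) none := by
      ext v
      rw [Set.mem_symmDiff]
      exact Iff.rfl
    rw [he]
    exact S18.count m n hm hn hmn _ (S18.injS_xor (m-1) (n-1) hM hN hMN)
end
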